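/- arXiv:2404.19476 — 4 statements merged into one kernel-verified Lean document; each statement's English description precedes it below -/
import Mathlib

section
/- In the flattened line-graph setting with odd n, weights W_0, …, W_{n+1} > 0 and C_{n+1} = 1, let v₂ = Σ_{k=1}^{n} (−1)^⌊k/2⌋ √(C_k) |L_k⟩ and σ = (−1)^{(n+1)/2}. Then |L_0⟩ + v₂ lies in the span of {ψ_i : i even, 0 ≤ i ≤ n−1}, and v₂ + σ|L_{n+1}⟩ is orthogonal to ψ_i for every odd i with 1 ≤ i ≤ n. Consequently R_Ā(|L_0⟩ + v₂ − σ|L_{n+1}⟩) = −|L_0⟩ − v₂ − σ|L_{n+1}⟩, and R_B̄ fixes −|L_0⟩ − v₂ − σ|L_{n+1}⟩. -/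
/-!
**Statement 15.**
In the flattened line-graph setting with odd `n`, weights `W_0, …, W_{n+1} > 0` and
`C_{n+1} = 1`, let `v₂ = ∑_{k=1}^{n} (−1)^⌊k/2⌋ √(C_k) |L_k⟩` and `σ = (−1)^{(n+1)/2}`.
Then `|L_0⟩ + v₂` lies in the span of `{ψ_i : i even, 0 ≤ i ≤ n−1}`, and `v₂ + σ|L_{n+1}⟩`
is orthogonal to `ψ_i` for every odd `i ≤ n`.  Consequently
`R_Ā (|L_0⟩ + v₂ − σ|L_{n+1}⟩) = −|L_0⟩ − v₂ − σ|L_{n+1}⟩` and `R_B̄` fixes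
`−|L_0⟩ − v₂ − σ|L_{n+1}⟩`.

The walk space `ℂ^{n+2}` is `EuclideanSpace ℂ (Fin (n+2))`, with `|L_i⟩ = ket n i` for
`0 ≤ i ≤ n+1`; `ψ_i = √(W_i)|L_i⟩ + √(W_{i+1})|L_{i+1}⟩`;
`C_k = ∏_{i=1}^{k} (W_{i−1}/W_i)^{(−1)^i}`; `⌊k/2⌋ = k/2` and `⌈k/2⌉ = (k+1)/2` in
natural-number division.  `R_Ā` is the unitary acting as `−1` on `span{ψ_i : i ≤ n even}`
and as the identity on its orthogonal complement, specified by these defining properties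
(similarly `R_B̄` for odd `i`).
-/

noncomputable section

namespace Stmt15

/-- `|L_i⟩`, the `i`-th basis vector of the flattened walk space. -/
def ket (n : ℕ) (i : ℕ) : EuclideanSpace ℂ (Fin (n + 2)) :=
  if h : i < n + 2 then EuclideanSpace.single ⟨i, h⟩ 1 else 0

/-- The flattened star state `ψ_i = √(W i) |L_i⟩ + √(W (i+1)) |L_{i+1}⟩`. -/
def psi (n : ℕ) (W : ℕ → ℝ) (i : ℕ) : EuclideanSpace ℂ (Fin (n + 2)) :=
  (Real.sqrt (W i) : ℂ) • ket n i + (Real.sqrt (W (i + 1)) : ℂ) • ket n (i + 1)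

/-- `C_k = ∏_{i=1}^{k} (W_{i−1}/W_i)^{(−1)^i}`. -/
def C (W : ℕ → ℝ) (k : ℕ) : ℝ :=
  ∏ i ∈ Finset.Icc 1 k, (W (i - 1) / W i) ^ ((-1 : ℤ) ^ i)

/-- `v₂ = ∑_{k=1}^{n} (−1)^⌊k/2⌋ √(C_k) |L_k⟩`. -/
def v₂ (n : ℕ) (W : ℕ → ℝ) : EuclideanSpace ℂ (Fin (n + 2)) :=
  ∑ k ∈ Finset.Icc 1 n, (((-1 : ℂ) ^ (k / 2) * (Real.sqrt (C W k) : ℂ)) • ket n k)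

/-!
Write `a_k = (−1)^⌊k/2⌋ √C_k`, so that `a_0 = 1`, `v₂ = ∑_{k=1}^{n} a_k |L_k⟩` and, as
`C_{n+1} = 1`, `a_{n+1} = σ`. The recursion for `C` gives `a_{k+1} √W_k = a_k √W_{k+1}` for
even `k`, so `a_k |L_k⟩ + a_{k+1} |L_{k+1}⟩` is a multiple of `ψ_k`, and
`a_k √W_k + a_{k+1} √W_{k+1} = 0` for odd `k`, so `∑ a_k |L_k⟩` is orthogonal to `ψ_k`.
Hence `R_Ā` negates `|L_0⟩ + v₂` and fixes `|L_{n+1}⟩`, while `R_B̄` fixes all of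
`|L_0⟩ + v₂ + σ |L_{n+1}⟩`.
-/

def coef (W : ℕ → ℝ) (k : ℕ) : ℂ :=
  (-1 : ℂ) ^ (k / 2) * (Real.sqrt (C W k) : ℂ)

lemma v₂_eq_sum_coef (n : ℕ) (W : ℕ → ℝ) :
    v₂ n W = ∑ k ∈ Finset.Icc 1 n, coef W k • ket n k := rfl

lemma coef_zero (W : ℕ → ℝ) : coef W 0 = 1 := by
  simp [coef, C]

lemma C_succ (W : ℕ → ℝ) (k : ℕ) :
    C W (k + 1) = C W k * (W k / W (k + 1)) ^ ((-1 : ℤ) ^ (k + 1)) := by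
  rw [C, Finset.prod_Icc_succ_top (Nat.le_add_left 1 k)]
  simp [C]

lemma sqrt_C_succ_mul_of_even {W : ℕ → ℝ} {k : ℕ} (hk : Even k) (h₀ : 0 < W k)
    (h₁ : 0 < W (k + 1)) :
    √(C W (k + 1)) * √(W k) = √(C W k) * √(W (k + 1)) := by
  have hC : C W (k + 1) * W k = C W k * W (k + 1) := by
    rw [C_succ, hk.add_one.neg_one_pow, zpow_neg_one, inv_div]
    field_simp
  rw [← Real.sqrt_mul' _ h₀.le, ← Real.sqrt_mul' _ h₁.le, hC]

lemma sqrt_C_succ_mul_of_odd {W : ℕ → ℝ} {k : ℕ} (hk : Odd k) (h₀ : 0 < W k)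
    (h₁ : 0 < W (k + 1)) :
    √(C W (k + 1)) * √(W (k + 1)) = √(C W k) * √(W k) := by
  have hC : C W (k + 1) * W (k + 1) = C W k * W k := by
    rw [C_succ, hk.add_one.neg_one_pow, zpow_one]
    field_simp
  rw [← Real.sqrt_mul' _ h₀.le, ← Real.sqrt_mul' _ h₁.le, hC]

lemma coef_succ_mul_of_even {W : ℕ → ℝ} {k : ℕ} (hk : Even k) (h₀ : 0 < W k)
    (h₁ : 0 < W (k + 1)) :
    coef W (k + 1) * √(W k) = coef W k * √(W (k + 1)) := by
  obtain ⟨m, rfl⟩ := hk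
  have hdiv : (m + m + 1) / 2 = (m + m) / 2 := by omega
  have h := congrArg (fun x : ℝ => (x : ℂ)) (sqrt_C_succ_mul_of_even ⟨m, rfl⟩ h₀ h₁)
  push_cast at h
  rw [coef, coef, hdiv]
  linear_combination (-1 : ℂ) ^ ((m + m) / 2) * h

lemma coef_mul_add_coef_succ_mul_of_odd {W : ℕ → ℝ} {k : ℕ} (hk : Odd k) (h₀ : 0 < W k)
    (h₁ : 0 < W (k + 1)) :
    coef W k * √(W k) + coef W (k + 1) * √(W (k + 1)) = 0 := by
  obtain ⟨m, rfl⟩ := hk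
  have hdiv : (2 * m + 1 + 1) / 2 = (2 * m + 1) / 2 + 1 := by omega
  have h := congrArg (fun x : ℝ => (x : ℂ)) (sqrt_C_succ_mul_of_odd ⟨m, rfl⟩ h₀ h₁)
  push_cast at h
  rw [coef, coef, hdiv]
  linear_combination (-(-1 : ℂ) ^ ((2 * m + 1) / 2)) * h

lemma inner_ket_ket {n k : ℕ} (hk : k < n + 2) (j : ℕ) :
    (inner ℂ (ket n k) (ket n j) : ℂ) = if k = j then 1 else 0 := by
  by_cases hj : j < n + 2
  · rw [ket, ket, dif_pos hk, dif_pos hj, EuclideanSpace.inner_single_left]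
    simp [Fin.ext_iff]
  · rw [show ket n j = 0 from dif_neg hj, inner_zero_right, if_neg (by omega)]

lemma inner_ket_sum_smul_ket {n k : ℕ} (hk : k < n + 2) (s : Finset ℕ) (c : ℕ → ℂ) :
    (inner ℂ (ket n k) (∑ j ∈ s, c j • ket n j) : ℂ) = if k ∈ s then c k else 0 := by
  simp only [inner_sum, inner_smul_right, inner_ket_ket hk, mul_ite, mul_one, mul_zero,
    Finset.sum_ite_eq]

lemma inner_psi (n : ℕ) (W : ℕ → ℝ) (i : ℕ) (x : EuclideanSpace ℂ (Fin (n + 2))) :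
    (inner ℂ (psi n W i) x : ℂ)
      = √(W i) * inner ℂ (ket n i) x + √(W (i + 1)) * inner ℂ (ket n (i + 1)) x := by
  simp only [psi, inner_add_left, inner_smul_left, Complex.conj_ofReal]

lemma inner_psi_ket_of_ne {n i j : ℕ} (W : ℕ → ℝ) (hi : i + 1 < n + 2) (hij : i ≠ j)
    (hij' : i + 1 ≠ j) : (inner ℂ (psi n W i) (ket n j) : ℂ) = 0 := by
  simp [inner_psi, inner_ket_ket (Nat.lt_of_succ_lt hi), inner_ket_ket hi, hij, hij']

lemma coef_smul_ket_add_coef_succ_smul_ket {n k : ℕ} {W : ℕ → ℝ} (hk : Even k)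
    (h₀ : 0 < W k) (h₁ : 0 < W (k + 1)) :
    coef W k • ket n k + coef W (k + 1) • ket n (k + 1)
      = (coef W k / √(W k)) • psi n W k := by
  have hs : (√(W k) : ℂ) ≠ 0 := Complex.ofReal_ne_zero.mpr (Real.sqrt_pos.mpr h₀).ne'
  rw [psi, smul_add, smul_smul, smul_smul, div_mul_cancel₀ _ hs, div_mul_eq_mul_div,
    ← coef_succ_mul_of_even hk h₀ h₁, mul_div_cancel_right₀ _ hs]

lemma sum_range_two_mul_mem_span {n : ℕ} {W : ℕ → ℝ} (hW : ∀ i ≤ n, 0 < W i) :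
    ∀ m, 2 * m ≤ n + 1 → ∑ k ∈ Finset.range (2 * m), coef W k • ket n k
      ∈ Submodule.span ℂ (psi n W '' {i | i ≤ n - 1 ∧ Even i})
  | 0, _ => by simp
  | m + 1, hm => by
    rw [show 2 * (m + 1) = 2 * m + 1 + 1 by ring, Finset.sum_range_succ, Finset.sum_range_succ,
      add_assoc, coef_smul_ket_add_coef_succ_smul_ket (even_two_mul m) (hW _ (by omega))
        (hW _ (by omega))]
    exact add_mem (sum_range_two_mul_mem_span hW m (by omega)) <| Submodule.smul_mem _ _ <|
      Submodule.subset_span ⟨2 * m, ⟨by omega, even_two_mul m⟩, rfl⟩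

lemma ket_zero_add_v₂ (n : ℕ) (W : ℕ → ℝ) :
    ket n 0 + v₂ n W = ∑ k ∈ Finset.range (n + 1), coef W k • ket n k := by
  rw [Finset.sum_range_eq_add_Ico _ n.add_one_pos, Finset.Ico_add_one_right_eq_Icc,
    coef_zero, one_smul, v₂_eq_sum_coef]

lemma ket_zero_add_v₂_mem_span {n : ℕ} (hn : Odd n) {W : ℕ → ℝ} (hW : ∀ i ≤ n, 0 < W i) :
    ket n 0 + v₂ n W ∈ Submodule.span ℂ (psi n W '' {i | i ≤ n - 1 ∧ Even i}) := by
  obtain ⟨t, rfl⟩ := hn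
  rw [ket_zero_add_v₂, show 2 * t + 1 + 1 = 2 * (t + 1) by ring]
  exact sum_range_two_mul_mem_span hW _ le_rfl

lemma coef_eq_of_C_eq_one {W : ℕ → ℝ} {n : ℕ} (hC : C W (n + 1) = 1) :
    coef W (n + 1) = (-1 : ℂ) ^ ((n + 1) / 2) := by
  simp [coef, hC]

lemma inner_psi_v₂_add_smul_ket {n : ℕ} {W : ℕ → ℝ} (hW : ∀ i ≤ n + 1, 0 < W i)
    (hC : C W (n + 1) = 1) {i : ℕ} (hi : i ≤ n) (hodd : Odd i) :
    (inner ℂ (psi n W i) (v₂ n W + ((-1 : ℂ) ^ ((n + 1) / 2)) • ket n (n + 1)) : ℂ) = 0 := by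
  rw [← coef_eq_of_C_eq_one hC, v₂_eq_sum_coef, ← Finset.sum_Icc_succ_top (by omega),
    inner_psi, inner_ket_sum_smul_ket (by omega), inner_ket_sum_smul_ket (by omega),
    if_pos (Finset.mem_Icc.mpr ⟨hodd.pos, by omega⟩), if_pos (Finset.mem_Icc.mpr ⟨by omega, by omega⟩),
    mul_comm, mul_comm _ (coef W (i + 1))]
  exact coef_mul_add_coef_succ_mul_of_odd hodd (hW i (by omega)) (hW (i + 1) (by omega))

theorem flattened_v2_reflections_general
    (n : ℕ) (hn : Odd n) (W : ℕ → ℝ) (hW : ∀ i ≤ n + 1, 0 < W i)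
    (hC : C W (n + 1) = 1)
    (RA RB : EuclideanSpace ℂ (Fin (n + 2)) →ₗ[ℂ] EuclideanSpace ℂ (Fin (n + 2)))
    (hRAneg : ∀ i, i ≤ n → Even i → RA (psi n W i) = -psi n W i)
    (hRAid : ∀ x, (∀ i, i ≤ n → Even i → (inner ℂ (psi n W i) x : ℂ) = 0) → RA x = x)
    (hRBid : ∀ x, (∀ i, i ≤ n → Odd i → (inner ℂ (psi n W i) x : ℂ) = 0) → RB x = x) :
    (ket n 0 + v₂ n W) ∈ Submodule.span ℂ (psi n W '' {i | i ≤ n - 1 ∧ Even i}) ∧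
    (∀ i, i ≤ n → Odd i →
      (inner ℂ (psi n W i) (v₂ n W + ((-1 : ℂ) ^ ((n + 1) / 2)) • ket n (n + 1)) : ℂ) = 0) ∧
    RA (ket n 0 + v₂ n W - ((-1 : ℂ) ^ ((n + 1) / 2)) • ket n (n + 1))
      = -ket n 0 - v₂ n W - ((-1 : ℂ) ^ ((n + 1) / 2)) • ket n (n + 1) ∧
    RB (-ket n 0 - v₂ n W - ((-1 : ℂ) ^ ((n + 1) / 2)) • ket n (n + 1))
      = -ket n 0 - v₂ n W - ((-1 : ℂ) ^ ((n + 1) / 2)) • ket n (n + 1) := by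
  set σ : ℂ := (-1 : ℂ) ^ ((n + 1) / 2)
  have hspan := ket_zero_add_v₂_mem_span hn fun i hi => hW i (by omega)
  have horth := fun i => inner_psi_v₂_add_smul_ket hW hC (i := i)
  have hRA_span : RA (ket n 0 + v₂ n W) = -(ket n 0 + v₂ n W) :=
    LinearMap.eqOn_span (g := -LinearMap.id)
      (by rintro _ ⟨i, ⟨hi, heven⟩, rfl⟩; exact hRAneg i (by omega) heven) hspan
  have hRA_ket : RA (σ • ket n (n + 1)) = σ • ket n (n + 1) := by
    refine hRAid _ fun i hi heven => ?_
    have : i ≠ n := fun h => Nat.not_even_iff_odd.mpr hn (h ▸ heven)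
    rw [inner_smul_right, inner_psi_ket_of_ne W (by omega) (by omega) (by omega), mul_zero]
  refine ⟨hspan, horth, ?_, ?_⟩
  · rw [map_sub, hRA_span, hRA_ket]
    abel
  · refine hRBid _ fun i hi hodd => ?_
    rw [show -ket n 0 - v₂ n W - σ • ket n (n + 1) = -ket n 0 - (v₂ n W + σ • ket n (n + 1))
      by abel, inner_sub_right, inner_neg_right, horth i hi hodd,
      inner_psi_ket_of_ne W (by omega) hodd.pos.ne' (by omega)]
    simp

theorem flattened_v2_reflections
    (n : ℕ) (hn : Odd n) (W : ℕ → ℝ) (hW : ∀ i ≤ n + 1, 0 < W i)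
    (hC : C W (n + 1) = 1)
    (RA RB : EuclideanSpace ℂ (Fin (n + 2)) →ₗ[ℂ] EuclideanSpace ℂ (Fin (n + 2)))
    (hRAneg : ∀ i, i ≤ n → Even i → RA (psi n W i) = -psi n W i)
    (hRAid : ∀ x, (∀ i, i ≤ n → Even i → (inner ℂ (psi n W i) x : ℂ) = 0) → RA x = x)
    (hRBneg : ∀ i, i ≤ n → Odd i → RB (psi n W i) = -psi n W i)
    (hRBid : ∀ x, (∀ i, i ≤ n → Odd i → (inner ℂ (psi n W i) x : ℂ) = 0) → RB x = x) :
    (ket n 0 + v₂ n W) ∈ Submodule.span ℂ (psi n W '' {i | i ≤ n - 1 ∧ Even i}) ∧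
    (∀ i, i ≤ n → Odd i →
      (inner ℂ (psi n W i) (v₂ n W + ((-1 : ℂ) ^ ((n + 1) / 2)) • ket n (n + 1)) : ℂ) = 0) ∧
    RA (ket n 0 + v₂ n W - ((-1 : ℂ) ^ ((n + 1) / 2)) • ket n (n + 1))
      = -ket n 0 - v₂ n W - ((-1 : ℂ) ^ ((n + 1) / 2)) • ket n (n + 1) ∧
    RB (-ket n 0 - v₂ n W - ((-1 : ℂ) ^ ((n + 1) / 2)) • ket n (n + 1))
      = -ket n 0 - v₂ n W - ((-1 : ℂ) ^ ((n + 1) / 2)) • ket n (n + 1) :=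
  flattened_v2_reflections_general n hn W hW hC RA RB hRAneg hRAid hRBid

end Stmt15
end
end

section
/- In the flattened line-graph setting with odd n, weights W_0, …, W_{n+1} > 0 and C_{n+1} = 1, let v₃ = Σ_{k=1}^{n} (−1)^⌈k/2⌉ (1/√(C_k)) |L_k⟩ and σ = (−1)^{(n+1)/2}. Then |L_0⟩ + v₃ is orthogonal to ψ_i for every even i with 0 ≤ i ≤ n−1, and v₃ + σ|L_{n+1}⟩ lies in the span of {ψ_i : i odd, 1 ≤ i ≤ n}. Consequently R_Ā fixes |L_0⟩ + v₃ + σ|L_{n+1}⟩, and R_B̄(|L_0⟩ + v₃ + σ|L_{n+1}⟩) = |L_0⟩ − v₃ − σ|L_{n+1}⟩. -/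
/-!
**Statement 16.**
In the flattened line-graph setting with odd `n`, weights `W_0, …, W_{n+1} > 0` and
`C_{n+1} = 1`, let `v₃ = ∑_{k=1}^{n} (−1)^⌈k/2⌉ (1/√(C_k)) |L_k⟩` and `σ = (−1)^{(n+1)/2}`.
Then `|L_0⟩ + v₃` is orthogonal to `ψ_i` for every even `i ≤ n−1`, and `v₃ + σ|L_{n+1}⟩`
lies in the span of `{ψ_i : i odd, 1 ≤ i ≤ n}`.  Consequently `R_Ā` fixes
`|L_0⟩ + v₃ + σ|L_{n+1}⟩`, and `R_B̄ (|L_0⟩ + v₃ + σ|L_{n+1}⟩) = |L_0⟩ − v₃ − σ|L_{n+1}⟩`.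

The walk space `ℂ^{n+2}` is `EuclideanSpace ℂ (Fin (n+2))`, with `|L_i⟩ = ket n i` for
`0 ≤ i ≤ n+1`; `ψ_i = √(W_i)|L_i⟩ + √(W_{i+1})|L_{i+1}⟩`;
`C_k = ∏_{i=1}^{k} (W_{i−1}/W_i)^{(−1)^i}`; `⌊k/2⌋ = k/2` and `⌈k/2⌉ = (k+1)/2` in
natural-number division.  `R_Ā` is the unitary acting as `−1` on `span{ψ_i : i ≤ n even}`
and as the identity on its orthogonal complement, specified by these defining properties
(similarly `R_B̄` for odd `i`).
-/

noncomputable section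

namespace Stmt16

def ket (n : ℕ) (i : ℕ) : EuclideanSpace ℂ (Fin (n + 2)) :=
  if h : i < n + 2 then EuclideanSpace.single ⟨i, h⟩ 1 else 0

def psi (n : ℕ) (W : ℕ → ℝ) (i : ℕ) : EuclideanSpace ℂ (Fin (n + 2)) :=
  (Real.sqrt (W i) : ℂ) • ket n i + (Real.sqrt (W (i + 1)) : ℂ) • ket n (i + 1)

def C (W : ℕ → ℝ) (k : ℕ) : ℝ :=
  ∏ i ∈ Finset.Icc 1 k, (W (i - 1) / W i) ^ ((-1 : ℤ) ^ i)

/-- `v₃ = ∑_{k=1}^{n} (−1)^⌈k/2⌉ (1/√(C_k)) |L_k⟩`. -/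
def v₃ (n : ℕ) (W : ℕ → ℝ) : EuclideanSpace ℂ (Fin (n + 2)) :=
  ∑ k ∈ Finset.Icc 1 n, (((-1 : ℂ) ^ ((k + 1) / 2) * ((Real.sqrt (C W k))⁻¹ : ℂ)) • ket n k)

/-!
Write `c_k = (−1)^⌈k/2⌉ / √C_k`, so that `|L_0⟩ + v₃ + σ|L_{n+1}⟩ = ∑_{k=0}^{n+1} c_k |L_k⟩`
(`c_0 = 1`, and `c_{n+1} = σ` because `C_{n+1} = 1`). The recursion
`C_{k+1} = C_k (W_k / W_{k+1})^{(−1)^{k+1}}` gives `√W_k c_k + √W_{k+1} c_{k+1} = 0` for even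
`k`, which is orthogonality to `ψ_k`, and `c_{k+1} √W_k = c_k √W_{k+1}` for odd `k`, which makes
`c_k |L_k⟩ + c_{k+1} |L_{k+1}⟩` a multiple of `ψ_k`. Hence `R_B̄` negates
`v₃ + σ|L_{n+1}⟩` and fixes `|L_0⟩`, which is orthogonal to every `ψ_i` with `i ≥ 1`.
-/

def coef (W : ℕ → ℝ) (k : ℕ) : ℂ :=
  (-1 : ℂ) ^ ((k + 1) / 2) * ((Real.sqrt (C W k))⁻¹ : ℂ)

lemma v₃_eq_sum_coef (n : ℕ) (W : ℕ → ℝ) :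
    v₃ n W = ∑ k ∈ Finset.Icc 1 n, coef W k • ket n k := rfl

section Kets

variable {n : ℕ}

lemma inner_ket_ket {i j : ℕ} (hi : i < n + 2) (hj : j < n + 2) :
    (inner ℂ (ket n i) (ket n j) : ℂ) = if i = j then 1 else 0 := by
  rw [ket, ket, dif_pos hi, dif_pos hj, EuclideanSpace.inner_single_left]
  simp [Fin.ext_iff]

lemma inner_psi_ket (W : ℕ → ℝ) {i j : ℕ} (hi : i + 1 < n + 2) (hj : j < n + 2) :
    (inner ℂ (psi n W i) (ket n j) : ℂ)
      = (if i = j then (Real.sqrt (W i) : ℂ) else 0)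
        + (if i + 1 = j then (Real.sqrt (W (i + 1)) : ℂ) else 0) := by
  rw [psi, inner_add_left, inner_smul_left, inner_smul_left,
    inner_ket_ket (by omega) hj, inner_ket_ket hi hj]
  simp [Complex.conj_ofReal, mul_ite]

lemma inner_psi_sum_smul_ket (W : ℕ → ℝ) (c : ℕ → ℂ) {a b i : ℕ} (ha : a ≤ i)
    (hb : i + 1 ≤ b) (hbn : b < n + 2) :
    (inner ℂ (psi n W i) (∑ k ∈ Finset.Icc a b, c k • ket n k) : ℂ)
      = Real.sqrt (W i) * c i + Real.sqrt (W (i + 1)) * c (i + 1) := by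
  have hterm : ∀ k ∈ Finset.Icc a b, (inner ℂ (psi n W i) (c k • ket n k) : ℂ)
      = (if i = k then Real.sqrt (W i) * c k else 0)
        + (if i + 1 = k then Real.sqrt (W (i + 1)) * c k else 0) := by
    intro k hk
    rw [inner_smul_right, inner_psi_ket W (by omega) (by grind)]
    split_ifs <;> ring
  rw [inner_sum, Finset.sum_congr rfl hterm, Finset.sum_add_distrib, Finset.sum_ite_eq,
    Finset.sum_ite_eq, if_pos (by grind), if_pos (by grind)]

lemma smul_ket_add_smul_ket_eq_smul_psi (W : ℕ → ℝ) (c : ℕ → ℂ) {k : ℕ} (hW : 0 < W k)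
    (hc : c (k + 1) * Real.sqrt (W k) = c k * Real.sqrt (W (k + 1))) :
    c k • ket n k + c (k + 1) • ket n (k + 1) = (c k / Real.sqrt (W k)) • psi n W k := by
  have hs : (Real.sqrt (W k) : ℂ) ≠ 0 := by exact_mod_cast (Real.sqrt_pos.mpr hW).ne'
  rw [psi, smul_add, smul_smul, smul_smul, div_mul_cancel₀ _ hs]
  congr 2
  field_simp
  linear_combination hc

end Kets

section Weights

variable {W : ℕ → ℝ}

lemma C_pos {k : ℕ} (hW : ∀ i ≤ k, 0 < W i) : 0 < C W k :=
  Finset.prod_pos fun i hi =>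
    zpow_pos (div_pos (hW _ (by grind)) (hW _ (by grind))) _

lemma C_succ (k : ℕ) : C W (k + 1) = C W k * (W k / W (k + 1)) ^ ((-1 : ℤ) ^ (k + 1)) := by
  rw [C, C, Finset.prod_Icc_succ_top (by omega), Nat.add_sub_cancel]

lemma C_succ_of_even {k : ℕ} (hk : Even k) : C W (k + 1) = C W k * (W (k + 1) / W k) := by
  rw [C_succ, hk.add_one.neg_one_pow, zpow_neg_one, inv_div]

lemma C_succ_of_odd {k : ℕ} (hk : Odd k) : C W (k + 1) = C W k * (W k / W (k + 1)) := by
  rw [C_succ, hk.add_one.neg_one_pow, zpow_one]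

lemma sqrt_div_sqrt_C_succ_of_even {k : ℕ} (hk : Even k) (hW : ∀ i ≤ k + 1, 0 < W i) :
    Real.sqrt (W (k + 1)) / Real.sqrt (C W (k + 1)) = Real.sqrt (W k) / Real.sqrt (C W k) := by
  have hC := C_pos fun i (hi : i ≤ k) => hW i (by omega)
  have h0 := hW k (by omega)
  have h1 := hW (k + 1) le_rfl
  rw [← Real.sqrt_div' _ hC.le, ← Real.sqrt_div' _ (C_pos hW).le, C_succ_of_even hk]
  congr 1
  field_simp

lemma sqrt_div_sqrt_C_succ_of_odd {k : ℕ} (hk : Odd k) (hW : ∀ i ≤ k + 1, 0 < W i) :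
    Real.sqrt (W k) / Real.sqrt (C W (k + 1)) = Real.sqrt (W (k + 1)) / Real.sqrt (C W k) := by
  have hC := C_pos fun i (hi : i ≤ k) => hW i (by omega)
  have h0 := hW k (by omega)
  have h1 := hW (k + 1) le_rfl
  rw [← Real.sqrt_div' _ hC.le, ← Real.sqrt_div' _ (C_pos hW).le, C_succ_of_odd hk]
  congr 1
  field_simp

lemma coef_zero : coef W 0 = 1 := by
  simp [coef, C]

lemma coef_of_C_eq_one {k : ℕ} (hk : C W k = 1) : coef W k = (-1 : ℂ) ^ ((k + 1) / 2) := by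
  simp [coef, hk]

lemma sqrt_mul_coef_add_sqrt_mul_coef_succ_of_even {k : ℕ} (hk : Even k)
    (hW : ∀ i ≤ k + 1, 0 < W i) :
    Real.sqrt (W k) * coef W k + Real.sqrt (W (k + 1)) * coef W (k + 1) = 0 := by
  obtain ⟨m, rfl⟩ := hk
  have h := congrArg Complex.ofReal (sqrt_div_sqrt_C_succ_of_even ⟨m, rfl⟩ hW)
  rw [coef, coef, show (m + m + 1) / 2 = m by omega, show (m + m + 1 + 1) / 2 = m + 1 by omega]
  push_cast at h ⊢
  linear_combination (-(-1 : ℂ) ^ m) * h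

lemma coef_succ_mul_sqrt_of_odd {k : ℕ} (hk : Odd k) (hW : ∀ i ≤ k + 1, 0 < W i) :
    coef W (k + 1) * Real.sqrt (W k) = coef W k * Real.sqrt (W (k + 1)) := by
  obtain ⟨m, rfl⟩ := hk
  have h := congrArg Complex.ofReal (sqrt_div_sqrt_C_succ_of_odd ⟨m, rfl⟩ hW)
  rw [coef, coef, show (2 * m + 1 + 1) / 2 = m + 1 by omega,
    show (2 * m + 1 + 1 + 1) / 2 = m + 1 by omega]
  push_cast at h ⊢
  linear_combination (-1 : ℂ) ^ (m + 1) * h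

end Weights

section Coefficients

variable {n : ℕ} {W : ℕ → ℝ}

lemma ket_zero_add_v₃ : ket n 0 + v₃ n W = ∑ k ∈ Finset.Icc 0 n, coef W k • ket n k := by
  rw [v₃_eq_sum_coef, ← Finset.add_sum_Ioc_eq_sum_Icc (Nat.zero_le n), coef_zero, one_smul,
    ← Finset.Icc_add_one_left_eq_Ioc, zero_add]

lemma inner_psi_sum_coef_smul_ket_of_even {b i : ℕ} (hi : Even i) (hib : i + 1 ≤ b)
    (hb : b ≤ n + 1) (hW : ∀ j ≤ b, 0 < W j) :
    (inner ℂ (psi n W i) (∑ k ∈ Finset.Icc 0 b, coef W k • ket n k) : ℂ) = 0 := by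
  rw [inner_psi_sum_smul_ket W _ (Nat.zero_le i) hib (by omega)]
  exact sqrt_mul_coef_add_sqrt_mul_coef_succ_of_even hi fun j hj => hW j (by omega)

lemma sum_coef_smul_ket_mem_span_psi_odd (m : ℕ) (hm : 2 * m ≤ n + 1)
    (hW : ∀ i ≤ 2 * m, 0 < W i) :
    ∑ k ∈ Finset.Icc 1 (2 * m), coef W k • ket n k
      ∈ Submodule.span ℂ (psi n W '' {i | 1 ≤ i ∧ i ≤ n ∧ Odd i}) := by
  induction m with
  | zero => simp
  | succ m ih =>
    rw [show 2 * (m + 1) = 2 * m + 1 + 1 by ring, Finset.sum_Icc_succ_top (by omega),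
      Finset.sum_Icc_succ_top (by omega), add_assoc,
      smul_ket_add_smul_ket_eq_smul_psi W _ (hW _ (by omega))
        (coef_succ_mul_sqrt_of_odd ⟨m, rfl⟩ fun i hi => hW i (by omega))]
    refine add_mem (ih (by omega) fun i hi => hW i (by omega))
      (Submodule.smul_mem _ _ (Submodule.subset_span ⟨2 * m + 1, ?_, rfl⟩))
    exact ⟨by omega, by omega, odd_two_mul_add_one m⟩

end Coefficients

theorem flattened_v3_reflections_general
    (n : ℕ) (hn : Odd n) (W : ℕ → ℝ) (hW : ∀ i ≤ n + 1, 0 < W i)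
    (hC : C W (n + 1) = 1)
    (RA RB : EuclideanSpace ℂ (Fin (n + 2)) →ₗ[ℂ] EuclideanSpace ℂ (Fin (n + 2)))
    (hRAid : ∀ x, (∀ i, i ≤ n → Even i → (inner ℂ (psi n W i) x : ℂ) = 0) → RA x = x)
    (hRBneg : ∀ i, i ≤ n → Odd i → RB (psi n W i) = -psi n W i)
    (hRBid : ∀ x, (∀ i, i ≤ n → Odd i → (inner ℂ (psi n W i) x : ℂ) = 0) → RB x = x) :
    (∀ i, i ≤ n - 1 → Even i →
      (inner ℂ (psi n W i) (ket n 0 + v₃ n W) : ℂ) = 0) ∧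
    (v₃ n W + ((-1 : ℂ) ^ ((n + 1) / 2)) • ket n (n + 1)) ∈
      Submodule.span ℂ (psi n W '' {i | 1 ≤ i ∧ i ≤ n ∧ Odd i}) ∧
    RA (ket n 0 + v₃ n W + ((-1 : ℂ) ^ ((n + 1) / 2)) • ket n (n + 1))
      = ket n 0 + v₃ n W + ((-1 : ℂ) ^ ((n + 1) / 2)) • ket n (n + 1) ∧
    RB (ket n 0 + v₃ n W + ((-1 : ℂ) ^ ((n + 1) / 2)) • ket n (n + 1))
      = ket n 0 - v₃ n W - ((-1 : ℂ) ^ ((n + 1) / 2)) • ket n (n + 1) := by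
  obtain ⟨m, hm⟩ := hn
  have hσ : coef W (n + 1) = (-1 : ℂ) ^ ((n + 1) / 2) := by
    rw [coef_of_C_eq_one hC, show (n + 1 + 1) / 2 = (n + 1) / 2 by omega]
  have htail : v₃ n W + ((-1 : ℂ) ^ ((n + 1) / 2)) • ket n (n + 1)
      = ∑ k ∈ Finset.Icc 1 (2 * (m + 1)), coef W k • ket n k := by
    rw [v₃_eq_sum_coef, ← hσ, show 2 * (m + 1) = n + 1 by omega,
      Finset.sum_Icc_succ_top (by omega)]
  have hspan := htail ▸ sum_coef_smul_ket_mem_span_psi_odd (m + 1) (by omega)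
    fun i hi => hW i (by omega)
  refine ⟨fun i hi he => ?_, hspan, hRAid _ fun i hi he => ?_, ?_⟩
  · rw [ket_zero_add_v₃]
    exact inner_psi_sum_coef_smul_ket_of_even he (by omega) (by omega)
      fun j hj => hW j (by omega)
  · rw [ket_zero_add_v₃, ← hσ, ← Finset.sum_Icc_succ_top (Nat.zero_le _)]
    exact inner_psi_sum_coef_smul_ket_of_even he (by omega) le_rfl hW
  · have hket : RB (ket n 0) = ket n 0 := hRBid _ fun i hi ho => by
      rw [inner_psi_ket W (by omega) (by omega), if_neg (by grind), if_neg (by omega), add_zero]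
    have hneg : RB (v₃ n W + ((-1 : ℂ) ^ ((n + 1) / 2)) • ket n (n + 1))
        = -(v₃ n W + ((-1 : ℂ) ^ ((n + 1) / 2)) • ket n (n + 1)) :=
      LinearMap.eqOn_span (g := -LinearMap.id)
        (by rintro _ ⟨i, ⟨-, hi, ho⟩, rfl⟩; exact hRBneg i hi ho) hspan
    rw [add_assoc, map_add, hket, hneg, ← sub_eq_add_neg, sub_sub]

theorem flattened_v3_reflections
    (n : ℕ) (hn : Odd n) (W : ℕ → ℝ) (hW : ∀ i ≤ n + 1, 0 < W i)
    (hC : C W (n + 1) = 1)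
    (RA RB : EuclideanSpace ℂ (Fin (n + 2)) →ₗ[ℂ] EuclideanSpace ℂ (Fin (n + 2)))
    (hRAneg : ∀ i, i ≤ n → Even i → RA (psi n W i) = -psi n W i)
    (hRAid : ∀ x, (∀ i, i ≤ n → Even i → (inner ℂ (psi n W i) x : ℂ) = 0) → RA x = x)
    (hRBneg : ∀ i, i ≤ n → Odd i → RB (psi n W i) = -psi n W i)
    (hRBid : ∀ x, (∀ i, i ≤ n → Odd i → (inner ℂ (psi n W i) x : ℂ) = 0) → RB x = x) :
    (∀ i, i ≤ n - 1 → Even i →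
      (inner ℂ (psi n W i) (ket n 0 + v₃ n W) : ℂ) = 0) ∧
    (v₃ n W + ((-1 : ℂ) ^ ((n + 1) / 2)) • ket n (n + 1)) ∈
      Submodule.span ℂ (psi n W '' {i | 1 ≤ i ∧ i ≤ n ∧ Odd i}) ∧
    RA (ket n 0 + v₃ n W + ((-1 : ℂ) ^ ((n + 1) / 2)) • ket n (n + 1))
      = ket n 0 + v₃ n W + ((-1 : ℂ) ^ ((n + 1) / 2)) • ket n (n + 1) ∧
    RB (ket n 0 + v₃ n W + ((-1 : ℂ) ^ ((n + 1) / 2)) • ket n (n + 1))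
      = ket n 0 - v₃ n W - ((-1 : ℂ) ^ ((n + 1) / 2)) • ket n (n + 1) :=
  flattened_v3_reflections_general n hn W hW hC RA RB hRAid hRBneg hRBid

end Stmt16
end
end

section
/- In the flattened line-graph setting with odd n, weights W_0, …, W_{n+1} > 0 and C_{n+1} = 1, let v₂ = Σ_{k=1}^{n} (−1)^⌊k/2⌋ √(C_k) |L_k⟩, v₃ = Σ_{k=1}^{n} (−1)^⌈k/2⌉ (1/√(C_k)) |L_k⟩, σ = (−1)^{(n+1)/2}, and U = R_B̄ R_Ā. Then −U(|L_0⟩ + (v₂+v₃)/2) = σ|L_{n+1}⟩ + (v₂+v₃)/2. Moreover ‖v₂‖² = Σ_{k=1}^{n} C_k and ‖v₃‖² = Σ_{k=1}^{n} 1/C_k, so the catalyst satisfies ‖(v₂+v₃)/2‖² ≤ (1/2) Σ_{k=1}^{n} (C_k + 1/C_k). -/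
/-!
Write `s_k = √C_k` and extend the coefficients of `v₂` and `v₃` to all `k`:
`a_k = (-1)^⌊k/2⌋ s_k`, `b_k = (-1)^⌈k/2⌉ / s_k`. The recursion for `C` gives
`√W_{i+1} s_i = √W_i s_{i+1}` for even `i` and `√W_{i+1} s_{i+1} = √W_i s_i` for odd `i`.
Hence on the sites `0, …, n` the vector `a` is a combination of the even stars and `b` is
orthogonal to them, while on `1, …, n+1` the vector `b` is a combination of the odd stars and `a`
is orthogonal to them. Since `s_0 = s_{n+1} = 1`, we have `a_0 = b_0 = 1` and
`a_{n+1} = b_{n+1} = σ`: the input is `(a + b)/2` on `0, …, n`, `R_Ā` turns it into `(b - a)/2`,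
which is also `(b - a)/2` on `1, …, n+1`, and `R_B̄` turns that into `-(a + b)/2` there.
-/

noncomputable section

namespace Stmt17

def ket (n : ℕ) (i : ℕ) : EuclideanSpace ℂ (Fin (n + 2)) :=
  if h : i < n + 2 then EuclideanSpace.single ⟨i, h⟩ 1 else 0

def psi (n : ℕ) (W : ℕ → ℝ) (i : ℕ) : EuclideanSpace ℂ (Fin (n + 2)) :=
  (Real.sqrt (W i) : ℂ) • ket n i + (Real.sqrt (W (i + 1)) : ℂ) • ket n (i + 1)

def C (W : ℕ → ℝ) (k : ℕ) : ℝ :=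
  ∏ i ∈ Finset.Icc 1 k, (W (i - 1) / W i) ^ ((-1 : ℤ) ^ i)

def v₂ (n : ℕ) (W : ℕ → ℝ) : EuclideanSpace ℂ (Fin (n + 2)) :=
  ∑ k ∈ Finset.Icc 1 n, (((-1 : ℂ) ^ (k / 2) * (Real.sqrt (C W k) : ℂ)) • ket n k)

def v₃ (n : ℕ) (W : ℕ → ℝ) : EuclideanSpace ℂ (Fin (n + 2)) :=
  ∑ k ∈ Finset.Icc 1 n, (((-1 : ℂ) ^ ((k + 1) / 2) * ((Real.sqrt (C W k))⁻¹ : ℂ)) • ket n k)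

open Finset Submodule

theorem apply_eq_neg_of_mem_span {𝕜 E : Type*} [Ring 𝕜] [AddCommGroup E] [Module 𝕜 E]
    {f : E →ₗ[𝕜] E} {s : Set E} (h : ∀ v ∈ s, f v = -v) {x : E} (hx : x ∈ span 𝕜 s) :
    f x = -x := by
  induction hx using Submodule.span_induction with
  | mem v hv => exact h v hv
  | zero => simp
  | add u v _ _ hu hv => rw [map_add, hu, hv, neg_add]
  | smul a v _ hv => rw [map_smul, hv, smul_neg]

theorem norm_smul_half_add_sq_le {E : Type*} [SeminormedAddCommGroup E] [NormedSpace ℂ E]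
    (a b : E) : ‖(2⁻¹ : ℂ) • (a + b)‖ ^ 2 ≤ (‖a‖ ^ 2 + ‖b‖ ^ 2) / 2 := by
  have hle : ‖a + b‖ ^ 2 ≤ (‖a‖ + ‖b‖) ^ 2 := by gcongr; exact norm_add_le a b
  rw [norm_smul, norm_inv, Complex.norm_ofNat]
  nlinarith [add_sq_le (a := ‖a‖) (b := ‖b‖)]

section Weights

variable {W : ℕ → ℝ} {i k : ℕ}

theorem C_zero (W : ℕ → ℝ) : C W 0 = 1 := by simp [C]

theorem C_succ (W : ℕ → ℝ) (k : ℕ) :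
    C W (k + 1) = C W k * (W k / W (k + 1)) ^ ((-1 : ℤ) ^ (k + 1)) := by
  rw [C, prod_Icc_succ_top (by omega), ← C, Nat.add_sub_cancel]

theorem C_pos (hW : ∀ j ≤ k, 0 < W j) : 0 < C W k :=
  prod_pos fun j hj ↦ zpow_pos (div_pos (hW _ (by grind)) (hW _ (by grind))) _

theorem W_succ_mul_C_of_even (hi : Even i) (hW : W i ≠ 0) :
    W (i + 1) * C W i = W i * C W (i + 1) := by
  rw [C_succ, hi.add_one.neg_one_pow, zpow_neg_one, inv_div]
  field_simp

theorem W_succ_mul_C_succ_of_odd (hi : Odd i) (hW : W (i + 1) ≠ 0) :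
    W (i + 1) * C W (i + 1) = W i * C W i := by
  rw [C_succ, hi.add_one.neg_one_pow, zpow_one]
  field_simp

theorem sqrt_mul_sqrt_of_mul_eq {a b c d : ℝ} (ha : 0 ≤ a) (hc : 0 ≤ c) (h : a * b = c * d) :
    √a * √b = √c * √d := by
  rw [← Real.sqrt_mul ha, ← Real.sqrt_mul hc, h]

def coeff₂ (W : ℕ → ℝ) (k : ℕ) : ℝ := (-1) ^ (k / 2) * √(C W k)

def coeff₃ (W : ℕ → ℝ) (k : ℕ) : ℝ := (-1) ^ ((k + 1) / 2) * (√(C W k))⁻¹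

theorem coeff₂_zero (W : ℕ → ℝ) : coeff₂ W 0 = 1 := by simp [coeff₂, C_zero]

theorem coeff₃_zero (W : ℕ → ℝ) : coeff₃ W 0 = 1 := by simp [coeff₃, C_zero]

theorem coeff₂_of_C_eq_one (hC : C W k = 1) : coeff₂ W k = (-1) ^ (k / 2) := by
  simp [coeff₂, hC]

theorem coeff₃_of_C_eq_one (hk : Even k) (hC : C W k = 1) : coeff₃ W k = (-1) ^ (k / 2) := by
  obtain ⟨j, rfl⟩ := hk
  simp [coeff₃, hC, show (j + j + 1) / 2 = (j + j) / 2 by omega]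

theorem coeff₂_sq (hC : 0 ≤ C W k) : coeff₂ W k ^ 2 = C W k := by
  rw [coeff₂, mul_pow, Real.sq_sqrt hC, ← pow_mul, Even.neg_one_pow ⟨k / 2, by ring⟩, one_mul]

theorem coeff₃_sq (hC : 0 ≤ C W k) : coeff₃ W k ^ 2 = 1 / C W k := by
  rw [coeff₃, mul_pow, inv_pow, Real.sq_sqrt hC, ← pow_mul,
    Even.neg_one_pow ⟨(k + 1) / 2, by ring⟩, one_mul, one_div]

section Pairs

variable (hW : ∀ j ≤ i + 1, 0 < W j)
include hW

theorem sqrt_mul_coeff₂_of_even (hi : Even i) :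
    √(W (i + 1)) * coeff₂ W i = √(W i) * coeff₂ W (i + 1) := by
  obtain ⟨j, rfl⟩ := hi
  have := sqrt_mul_sqrt_of_mul_eq (hW _ le_rfl).le (hW _ (by omega)).le
    (W_succ_mul_C_of_even ⟨j, rfl⟩ (hW _ (by omega)).ne')
  simp only [coeff₂, show (j + j + 1) / 2 = (j + j) / 2 by omega]
  linear_combination (-1 : ℝ) ^ ((j + j) / 2) * this

theorem sqrt_mul_coeff₃_add_of_even (hi : Even i) :
    √(W i) * coeff₃ W i + √(W (i + 1)) * coeff₃ W (i + 1) = 0 := by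
  obtain ⟨j, rfl⟩ := hi
  have := sqrt_mul_sqrt_of_mul_eq (hW _ le_rfl).le (hW _ (by omega)).le
    (W_succ_mul_C_of_even ⟨j, rfl⟩ (hW _ (by omega)).ne')
  have h₀ : 0 < √(C W (j + j)) := Real.sqrt_pos.2 (C_pos fun l hl ↦ hW l (by omega))
  have h₁ : 0 < √(C W (j + j + 1)) := Real.sqrt_pos.2 (C_pos hW)
  simp only [coeff₃, show (j + j + 1) / 2 = (j + j) / 2 by omega,
    show (j + j + 1 + 1) / 2 = (j + j) / 2 + 1 by omega]
  field_simp
  linear_combination -(-1 : ℝ) ^ ((j + j) / 2) * this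

theorem sqrt_mul_coeff₃_of_odd (hi : Odd i) :
    √(W (i + 1)) * coeff₃ W i = √(W i) * coeff₃ W (i + 1) := by
  obtain ⟨j, rfl⟩ := hi
  have := sqrt_mul_sqrt_of_mul_eq (hW _ le_rfl).le (hW _ (by omega)).le
    (W_succ_mul_C_succ_of_odd ⟨j, rfl⟩ (hW _ le_rfl).ne')
  have h₀ : 0 < √(C W (2 * j + 1)) := Real.sqrt_pos.2 (C_pos fun l hl ↦ hW l (by omega))
  have h₁ : 0 < √(C W (2 * j + 1 + 1)) := Real.sqrt_pos.2 (C_pos hW)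
  simp only [coeff₃, show (2 * j + 1 + 1 + 1) / 2 = (2 * j + 1 + 1) / 2 by omega]
  field_simp
  linear_combination this

theorem sqrt_mul_coeff₂_add_of_odd (hi : Odd i) :
    √(W i) * coeff₂ W i + √(W (i + 1)) * coeff₂ W (i + 1) = 0 := by
  obtain ⟨j, rfl⟩ := hi
  have := sqrt_mul_sqrt_of_mul_eq (hW _ le_rfl).le (hW _ (by omega)).le
    (W_succ_mul_C_succ_of_odd ⟨j, rfl⟩ (hW _ le_rfl).ne')
  simp only [coeff₂, show (2 * j + 1 + 1) / 2 = (2 * j + 1) / 2 + 1 by omega]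
  linear_combination -(-1 : ℝ) ^ ((2 * j + 1) / 2) * this

end Pairs

end Weights

section Kets

variable {n : ℕ}

theorem inner_ket_ket {i : ℕ} (hi : i < n + 2) (k : ℕ) :
    inner ℂ (ket n i) (ket n k) = if i = k then 1 else 0 := by
  by_cases hk : k < n + 2
  · simp [ket, hi, hk, EuclideanSpace.inner_single_left, Fin.ext_iff]
  · simp only [ket, hk, ↓reduceDIte, inner_zero_right, right_eq_ite_iff, zero_ne_one, imp_false]
    omega

def ketSum (n : ℕ) (s : Finset ℕ) (F : ℕ → ℝ) : EuclideanSpace ℂ (Fin (n + 2)) :=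
  ∑ k ∈ s, (F k : ℂ) • ket n k

theorem ketSum_insert {s : Finset ℕ} {i : ℕ} (hi : i ∉ s) (F : ℕ → ℝ) :
    ketSum n (insert i s) F = (F i : ℂ) • ket n i + ketSum n s F :=
  sum_insert hi

theorem ketSum_Icc_zero (k : ℕ) (F : ℕ → ℝ) :
    ketSum n (Icc 0 k) F = (F 0 : ℂ) • ket n 0 + ketSum n (Icc 1 k) F := by
  rw [← insert_Icc_add_one_left_eq_Icc k.zero_le, ketSum_insert (by simp), zero_add]

theorem ketSum_Icc_succ (k : ℕ) (F : ℕ → ℝ) :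
    ketSum n (Icc 1 (k + 1)) F = (F (k + 1) : ℂ) • ket n (k + 1) + ketSum n (Icc 1 k) F := by
  rw [← insert_Icc_right_eq_Icc_add_one (by omega), ketSum_insert (by simp)]

theorem inner_ket_ketSum {i : ℕ} (hi : i < n + 2) (s : Finset ℕ) (F : ℕ → ℝ) :
    inner ℂ (ket n i) (ketSum n s F) = if i ∈ s then (F i : ℂ) else 0 := by
  simp [ketSum, inner_ket_ket hi]

theorem norm_ketSum_sq {s : Finset ℕ} (hs : ∀ k ∈ s, k < n + 2) (F : ℕ → ℝ) :
    ‖ketSum n s F‖ ^ 2 = ∑ k ∈ s, F k ^ 2 := by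
  have : inner ℂ (ketSum n s F) (ketSum n s F) = ((∑ k ∈ s, F k ^ 2 : ℝ) : ℂ) := by
    refine (sum_inner s _ (ketSum n s F)).trans ?_
    push_cast
    refine sum_congr rfl fun k hk ↦ ?_
    rw [inner_smul_left, inner_ket_ketSum (hs k hk), if_pos hk, Complex.conj_ofReal, sq]
  rw [← inner_self_eq_norm_sq (𝕜 := ℂ), this]
  exact Complex.ofReal_re _

theorem v₂_eq_ketSum (W : ℕ → ℝ) : v₂ n W = ketSum n (Icc 1 n) (coeff₂ W) := by
  simp [v₂, ketSum, coeff₂]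

theorem v₃_eq_ketSum (W : ℕ → ℝ) : v₃ n W = ketSum n (Icc 1 n) (coeff₃ W) := by
  simp [v₃, ketSum, coeff₃]

end Kets

section Psi

variable {n : ℕ} {W : ℕ → ℝ}

theorem inner_psi_ketSum {s : Finset ℕ} {i : ℕ} (hi : i ≤ n) (hs : i ∈ s) (hs' : i + 1 ∈ s)
    (F : ℕ → ℝ) :
    inner ℂ (psi n W i) (ketSum n s F) = ((√(W i) * F i + √(W (i + 1)) * F (i + 1) : ℝ) : ℂ) := by
  simp [psi, inner_ket_ketSum (show i < n + 2 by omega),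
    inner_ket_ketSum (show i + 1 < n + 2 by omega), hs, hs']

theorem pair_mem_span_psi {F : ℕ → ℝ} {S : Set ℕ} {i : ℕ} (hS : i ∈ S) (hW : 0 < W i)
    (hF : √(W (i + 1)) * F i = √(W i) * F (i + 1)) :
    (F i : ℂ) • ket n i + (F (i + 1) : ℂ) • ket n (i + 1) ∈ span ℂ (psi n W '' S) := by
  have hsqrt : √(W i) ≠ 0 := (Real.sqrt_pos.2 hW).ne'
  have hcoeff : F i / √(W i) * √(W (i + 1)) = F (i + 1) := by
    field_simp
    linarith
  have : ((F i / √(W i) : ℝ) : ℂ) • psi n W i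
      = (F i : ℂ) • ket n i + (F (i + 1) : ℂ) • ket n (i + 1) := by
    rw [psi, smul_add, smul_smul, smul_smul, ← Complex.ofReal_mul, ← Complex.ofReal_mul,
      div_mul_cancel₀ _ hsqrt, hcoeff]
  exact this ▸ smul_mem _ _ (subset_span (Set.mem_image_of_mem _ hS))

theorem ketSum_Icc_mem_span_psi {F : ℕ → ℝ} {S : Set ℕ} (a m : ℕ)
    (hS : ∀ j ≤ m, a + 2 * j ∈ S) (hW : ∀ j ≤ m, 0 < W (a + 2 * j))
    (hF : ∀ j ≤ m, √(W (a + 2 * j + 1)) * F (a + 2 * j) = √(W (a + 2 * j)) * F (a + 2 * j + 1)) :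
    ketSum n (Icc a (a + 2 * m + 1)) F ∈ span ℂ (psi n W '' S) := by
  induction m with
  | zero =>
    rw [ketSum, sum_Icc_succ_top (by omega), Icc_self, sum_singleton]
    exact pair_mem_span_psi (hS 0 le_rfl) (hW 0 le_rfl) (hF 0 le_rfl)
  | succ m ih =>
    rw [show a + 2 * (m + 1) + 1 = a + 2 * m + 1 + 1 + 1 by ring, ketSum,
      sum_Icc_succ_top (by omega), sum_Icc_succ_top (by omega), add_assoc,
      show a + 2 * m + 1 + 1 = a + 2 * (m + 1) by ring]
    exact add_mem (ih (fun j hj ↦ hS j (by omega)) (fun j hj ↦ hW j (by omega))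
      (fun j hj ↦ hF j (by omega)))
      (pair_mem_span_psi (hS _ le_rfl) (hW _ le_rfl) (hF _ le_rfl))

variable (hW : ∀ i ≤ n + 1, 0 < W i)
include hW

theorem ketSum_coeff₂_mem_span_psi_even (hn : Odd n) :
    ketSum n (Icc 0 n) (coeff₂ W) ∈ span ℂ (psi n W '' {i | i ≤ n ∧ Even i}) := by
  obtain ⟨m, rfl⟩ := hn
  have := ketSum_Icc_mem_span_psi (n := 2 * m + 1) (S := {i | i ≤ 2 * m + 1 ∧ Even i}) 0 m
    (fun j hj ↦ ⟨by omega, ⟨j, by omega⟩⟩) (fun j hj ↦ hW _ (by omega))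
    (fun j hj ↦ sqrt_mul_coeff₂_of_even (fun l hl ↦ hW l (by omega)) ⟨j, by omega⟩)
  rwa [zero_add] at this

theorem ketSum_coeff₃_mem_span_psi_odd (hn : Odd n) :
    ketSum n (Icc 1 (n + 1)) (coeff₃ W) ∈ span ℂ (psi n W '' {i | i ≤ n ∧ Odd i}) := by
  obtain ⟨m, rfl⟩ := hn
  have := ketSum_Icc_mem_span_psi (n := 2 * m + 1) (S := {i | i ≤ 2 * m + 1 ∧ Odd i}) 1 m
    (fun j hj ↦ ⟨by omega, ⟨j, by omega⟩⟩) (fun j hj ↦ hW _ (by omega))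
    (fun j hj ↦ sqrt_mul_coeff₃_of_odd (fun l hl ↦ hW l (by omega)) ⟨j, by omega⟩)
  rwa [show 1 + 2 * m + 1 = 2 * m + 1 + 1 by ring] at this

theorem inner_psi_ketSum_coeff₃_of_even (hn : Odd n) {i : ℕ} (hi : i ≤ n) (he : Even i) :
    inner ℂ (psi n W i) (ketSum n (Icc 0 n) (coeff₃ W)) = 0 := by
  have hi' : i + 1 ≤ n := by
    obtain ⟨m, rfl⟩ := hn
    obtain ⟨j, rfl⟩ := he
    omega
  rw [inner_psi_ketSum hi (mem_Icc.2 ⟨by omega, by omega⟩) (mem_Icc.2 ⟨by omega, by omega⟩),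
    sqrt_mul_coeff₃_add_of_even (fun l hl ↦ hW l (by omega)) he, Complex.ofReal_zero]

theorem inner_psi_ketSum_coeff₂_of_odd {i : ℕ} (hi : i ≤ n) (ho : Odd i) :
    inner ℂ (psi n W i) (ketSum n (Icc 1 (n + 1)) (coeff₂ W)) = 0 := by
  have hi' : 1 ≤ i := ho.pos
  rw [inner_psi_ketSum hi (mem_Icc.2 ⟨by omega, by omega⟩) (mem_Icc.2 ⟨by omega, by omega⟩),
    sqrt_mul_coeff₂_add_of_odd (fun l hl ↦ hW l (by omega)) ho, Complex.ofReal_zero]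

end Psi

theorem flattened_transduction
    (n : ℕ) (hn : Odd n) (W : ℕ → ℝ) (hW : ∀ i ≤ n + 1, 0 < W i)
    (hC : C W (n + 1) = 1)
    (RA RB : EuclideanSpace ℂ (Fin (n + 2)) →ₗ[ℂ] EuclideanSpace ℂ (Fin (n + 2)))
    (hRAneg : ∀ i, i ≤ n → Even i → RA (psi n W i) = -psi n W i)
    (hRAid : ∀ x, (∀ i, i ≤ n → Even i → (inner ℂ (psi n W i) x : ℂ) = 0) → RA x = x)
    (hRBneg : ∀ i, i ≤ n → Odd i → RB (psi n W i) = -psi n W i)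
    (hRBid : ∀ x, (∀ i, i ≤ n → Odd i → (inner ℂ (psi n W i) x : ℂ) = 0) → RB x = x) :
    -(RB (RA (ket n 0 + (2⁻¹ : ℂ) • (v₂ n W + v₃ n W))))
      = ((-1 : ℂ) ^ ((n + 1) / 2)) • ket n (n + 1) + (2⁻¹ : ℂ) • (v₂ n W + v₃ n W) ∧
    ‖v₂ n W‖ ^ 2 = ∑ k ∈ Finset.Icc 1 n, C W k ∧
    ‖v₃ n W‖ ^ 2 = ∑ k ∈ Finset.Icc 1 n, 1 / C W k ∧
    ‖(2⁻¹ : ℂ) • (v₂ n W + v₃ n W)‖ ^ 2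
      ≤ (1 / 2) * ∑ k ∈ Finset.Icc 1 n, (C W k + 1 / C W k) := by
  set P₂ := ketSum n (Icc 0 n) (coeff₂ W)
  set P₃ := ketSum n (Icc 0 n) (coeff₃ W)
  set Q₂ := ketSum n (Icc 1 (n + 1)) (coeff₂ W)
  set Q₃ := ketSum n (Icc 1 (n + 1)) (coeff₃ W)
  have hA₂ : RA P₂ = -P₂ := apply_eq_neg_of_mem_span
    (Set.forall_mem_image.2 fun i hi ↦ hRAneg i hi.1 hi.2) (ketSum_coeff₂_mem_span_psi_even hW hn)
  have hA₃ : RA P₃ = P₃ := hRAid _ fun i hi he ↦ inner_psi_ketSum_coeff₃_of_even hW hn hi he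
  have hB₃ : RB Q₃ = -Q₃ := apply_eq_neg_of_mem_span
    (Set.forall_mem_image.2 fun i hi ↦ hRBneg i hi.1 hi.2) (ketSum_coeff₃_mem_span_psi_odd hW hn)
  have hB₂ : RB Q₂ = Q₂ := hRBid _ fun i hi ho ↦ inner_psi_ketSum_coeff₂_of_odd hW hi ho
  have hσ : Even (n + 1) := hn.add_one
  have hstart : ket n 0 + (2⁻¹ : ℂ) • (v₂ n W + v₃ n W) = (2⁻¹ : ℂ) • (P₂ + P₃) := by
    simp only [P₂, P₃, ketSum_Icc_zero, coeff₂_zero, coeff₃_zero, v₂_eq_ketSum, v₃_eq_ketSum]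
    module
  have hmiddle : P₃ - P₂ = Q₃ - Q₂ := by
    simp only [P₂, P₃, Q₂, Q₃, ketSum_Icc_zero, ketSum_Icc_succ, coeff₂_zero, coeff₃_zero,
      coeff₂_of_C_eq_one hC, coeff₃_of_C_eq_one hσ hC]
    module
  have hend : (2⁻¹ : ℂ) • (Q₂ + Q₃)
      = ((-1 : ℂ) ^ ((n + 1) / 2)) • ket n (n + 1) + (2⁻¹ : ℂ) • (v₂ n W + v₃ n W) := by
    simp only [Q₂, Q₃, ketSum_Icc_succ, coeff₂_of_C_eq_one hC, coeff₃_of_C_eq_one hσ hC,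
      v₂_eq_ketSum, v₃_eq_ketSum]
    push_cast
    module
  have hCpos : ∀ k ∈ Icc 1 n, 0 ≤ C W k := fun k hk ↦
    (C_pos fun i hi ↦ hW i (by grind)).le
  have hsupp : ∀ k ∈ Icc 1 n, k < n + 2 := fun k hk ↦ by grind
  have hv₂ : ‖v₂ n W‖ ^ 2 = ∑ k ∈ Icc 1 n, C W k := by
    rw [v₂_eq_ketSum, norm_ketSum_sq hsupp]
    exact sum_congr rfl fun k hk ↦ coeff₂_sq (hCpos k hk)
  have hv₃ : ‖v₃ n W‖ ^ 2 = ∑ k ∈ Icc 1 n, 1 / C W k := by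
    rw [v₃_eq_ketSum, norm_ketSum_sq hsupp]
    exact sum_congr rfl fun k hk ↦ coeff₃_sq (hCpos k hk)
  refine ⟨?_, hv₂, hv₃, ?_⟩
  · rw [hstart, map_smul, map_add, hA₂, hA₃, neg_add_eq_sub, hmiddle, map_smul, map_sub, hB₃,
      hB₂, ← hend]
    module
  · calc ‖(2⁻¹ : ℂ) • (v₂ n W + v₃ n W)‖ ^ 2 ≤ (‖v₂ n W‖ ^ 2 + ‖v₃ n W‖ ^ 2) / 2 :=
          norm_smul_half_add_sq_le _ _
      _ = _ := by rw [hv₂, hv₃, sum_add_distrib]; ring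

end Stmt17
end
end

section
/- Let G' be an extended 1-dimensional hierarchical graph with n odd and with dangling-edge weights W_0, W_{n+1} > 0 chosen so that C_{n+1} = 1, and let U = R_B R_A be one step of the quantum walk on G'. Then −U transduces |ss'⟩ = |L_0⟩ into (−1)^{(n+1)/2} |t't⟩ = (−1)^{(n+1)/2} |L_{n+1}⟩ with transduction complexity not exceeding (1/2) Σ_{k=1}^{n} (C_k + 1/C_k); that is, there exists a vector v in the span of {|e⟩ : e ∈ E} with ‖v‖² ≤ (1/2) Σ_{k=1}^{n} (C_k + 1/C_k) such that −U(|L_0⟩ + v) = (−1)^{(n+1)/2} |L_{n+1}⟩ + v. -/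
/-!
**Statement 18.**
Let `G'` be an extended 1-dimensional hierarchical graph with `n` odd and with dangling-edge
weights `W_0, W_{n+1} > 0` chosen so that `C_{n+1} = 1`, and let `U = R_B R_A` be one step of
the quantum walk on `G'`.  Then `−U` transduces `|ss'⟩ = |L_0⟩` into
`(−1)^{(n+1)/2} |t't⟩ = (−1)^{(n+1)/2} |L_{n+1}⟩` with transduction complexity not exceeding
`(1/2) ∑_{k=1}^{n} (C_k + 1/C_k)`: there exists a vector `v` in the span of
`{|e⟩ : e ∈ E}` with `‖v‖² ≤ (1/2) ∑_{k=1}^{n} (C_k + 1/C_k)` such that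
`−U(|L_0⟩ + v) = (−1)^{(n+1)/2} |L_{n+1}⟩ + v`.

The hierarchical graph is modelled abstractly: vertices `V` carry a layer `vlayer u ≤ n`,
edges `E` carry a layer `elayer e ∈ {1, …, n}` and endpoint maps `lo` (in `S_{elayer e − 1}`)
and `hi` (in `S_{elayer e}`); `s` and `t` are the unique vertices of layers `0` and `n`;
every vertex of `S_i` (`i < n`) has exactly `d⁺_i` up-edges and every vertex of `S_i`
(`i ≥ 1`) has exactly `d⁻_i` down-edges.  All original edges have weight 1 and
`W_i = |L_i| > 0` for `1 ≤ i ≤ n`; `C_k = ∏_{i=1}^{k} (W_{i−1}/W_i)^{(−1)^i}`.  The walk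
space is `EuclideanSpace ℂ (E ⊕ Bool)` (`Sum.inr false = ss'`, `Sum.inr true = t't`);
`|L_i⟩ = (1/√(W_i)) ∑_{e ∈ L_i} |e⟩` and `ψ_u = ∑_{e ∼ u} √(w_e) |e⟩`.  The graph is
bipartite with parts `A` (vertices of even layer) and `B` (vertices of odd layer); `R_A` is
the unitary acting as `−1` on `span{ψ_u : u ∈ A}` and as the identity on its orthogonal
complement, specified by these defining properties (similarly `R_B`).
-/

noncomputable section

namespace Stmt18

variable {V E : Type*} [Fintype V] [Fintype E] [DecidableEq V] [DecidableEq E]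

def ket (x : E ⊕ Bool) : EuclideanSpace ℂ (E ⊕ Bool) := EuclideanSpace.single x 1

/-- The weight `W_i` of the `i`-th edge layer: `W_0` and `W_{n+1}` are the weights of the
dangling edges, and `W_i = |L_i|` for `1 ≤ i ≤ n`. -/
def Wt (n : ℕ) (elayer : E → ℕ) (W0 Wn1 : ℝ) (i : ℕ) : ℝ :=
  if i = 0 then W0 else if i = n + 1 then Wn1
  else ((Finset.univ.filter fun e => elayer e = i).card : ℝ)

/-- The normalized layer-uniform state `|L_i⟩`. -/
def Lket (n : ℕ) (elayer : E → ℕ) (W0 Wn1 : ℝ) (i : ℕ) : EuclideanSpace ℂ (E ⊕ Bool) :=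
  if i = 0 then ket (Sum.inr false) else if i = n + 1 then ket (Sum.inr true)
  else ((Real.sqrt (Wt n elayer W0 Wn1 i))⁻¹ : ℂ) •
    ∑ e ∈ Finset.univ.filter (fun e => elayer e = i), ket (Sum.inl e)

/-- The star state `ψ_u` of a vertex of the extended hierarchical graph. -/
def psi (lo hi : E → V) (s t : V) (W0 Wn1 : ℝ) (u : V) : EuclideanSpace ℂ (E ⊕ Bool) :=
  (∑ e ∈ Finset.univ.filter (fun e => hi e = u), ket (Sum.inl e)) +
  (∑ e ∈ Finset.univ.filter (fun e => lo e = u), ket (Sum.inl e)) +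
  (if u = s then (Real.sqrt W0 : ℂ) • ket (Sum.inr false) else 0) +
  (if u = t then (Real.sqrt Wn1 : ℂ) • ket (Sum.inr true) else 0)

/-- `C_k = ∏_{i=1}^{k} (W_{i−1}/W_i)^{(−1)^i}`. -/
def C (n : ℕ) (elayer : E → ℕ) (W0 Wn1 : ℝ) (k : ℕ) : ℝ :=
  ∏ i ∈ Finset.Icc 1 k, (Wt n elayer W0 Wn1 (i - 1) / Wt n elayer W0 Wn1 i) ^ ((-1 : ℤ) ^ i)

/-
The star states of a vertex layer add up to the unnormalised layer states:
`∑_{u ∈ S_i} ψ_u = √W_i |L_i⟩ + √W_{i+1} |L_{i+1}⟩`, and by regularity every `u ∈ S_i` has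
`⟨ψ_u, L_k⟩ = √W_k / |S_i|` for `k ∈ {i, i+1}` and `0` otherwise. Hence on `span {|L_k⟩}` the
reflection `R_A` (resp. `R_B`) acts blockwise on the pairs of layers `(i, i+1)` with `i` even
(resp. odd), negating `(√W_i, √W_{i+1})` and fixing its orthogonal complement.

Put `a_k = (-1)^⌊k/2⌋ √C_k` and `b_k = (-1)^⌈k/2⌉ / √C_k`. The recursion defining `C_k` says
exactly that on every `R_A`-block the pair `(a_i, a_{i+1})` is proportional and `(b_i, b_{i+1})`
orthogonal to `(√W_i, √W_{i+1})`, and the other way round on the `R_B`-blocks. So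
`P = ∑_{k=0}^{n} a_k |L_k⟩` is negated and `Q = ∑_{k=0}^{n} b_k |L_k⟩` fixed by `R_A`, while the
same sums over `k = 1, …, n+1` are fixed, resp. negated, by `R_B`. As `a_0 = b_0 = 1` and
`a_{n+1} = b_{n+1} = (-1)^{(n+1)/2}` (here `C_{n+1} = 1` and `n` odd enter), the vector
`v = ∑_{k=1}^{n} (a_k + b_k)/2 |L_k⟩` satisfies `|L_0⟩ + v = (P + Q)/2` and
`-R_B R_A (|L_0⟩ + v) = (-1)^{(n+1)/2} |L_{n+1}⟩ + v`. Finally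
`‖v‖² = ∑ ((a_k + b_k)/2)² ≤ ∑ (a_k² + b_k²)/2 = ½ ∑ (C_k + 1/C_k)`.
-/

open Finset

theorem sum_Ico_mem_of_pairs {M : Type*} [AddCommMonoid M] (S : AddSubmonoid M) (f : ℕ → M)
    (r m : ℕ) (h : ∀ j < m, f (r + 2 * j) + f (r + 2 * j + 1) ∈ S) :
    ∑ k ∈ Ico r (r + 2 * m), f k ∈ S := by
  induction m with
  | zero => simp [S.zero_mem]
  | succ m ih =>
    rw [show r + 2 * (m + 1) = r + 2 * m + 1 + 1 by ring, sum_Ico_succ_top (by omega),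
      sum_Ico_succ_top (by omega), add_assoc]
    exact S.add_mem (ih fun j hj => h j (by omega)) (h m (by omega))

theorem apply_eq_neg_of_mem_span {K M ι : Type*} [CommRing K] [AddCommGroup M] [Module K M]
    (f : M →ₗ[K] M) {v : ι → M} {P : ι → Prop} (hneg : ∀ i, P i → f (v i) = -v i) {x : M}
    (hx : x ∈ Submodule.span K (v '' {i | P i})) : f x = -x := by
  have hle : Submodule.span K (v '' {i | P i}) ≤ Module.End.eigenspace f (-1) := by
    rw [Submodule.span_le]
    rintro _ ⟨i, hi, rfl⟩
    simp [hneg i hi]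
  simpa [Module.End.mem_eigenspace_iff] using hle hx

theorem neg_apply_apply_eq_of_eigen {K M : Type*} [Field K] [CharZero K] [AddCommGroup M]
    [Module K M] (f g : M →ₗ[K] M) {x y p q : M} {ε : K} (hfp : f (x + p) = -(x + p))
    (hfq : f (x + q) = x + q) (hgp : g (p + ε • y) = p + ε • y)
    (hgq : g (q + ε • y) = -(q + ε • y)) :
    -g (f (x + (1 / 2 : K) • (p + q))) = ε • y + (1 / 2 : K) • (p + q) := by
  have hsplit : x + (1 / 2 : K) • (p + q) = (1 / 2 : K) • ((x + p) + (x + q)) := by module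
  have hswap : -(x + p) + (x + q) = -(p + ε • y) + (q + ε • y) := by abel
  rw [hsplit, map_smul, map_add, hfp, hfq, hswap, map_smul, map_add, map_neg, hgp, hgq]
  module

structure IsHierarchical (n : ℕ) (vlayer : V → ℕ) (elayer : E → ℕ) (lo hi : E → V) (s t : V)
    (dplus dminus : ℕ → ℕ) : Prop where
  vlayer_le : ∀ u, vlayer u ≤ n
  elayer_mem : ∀ e, 1 ≤ elayer e ∧ elayer e ≤ n
  vlayer_lo : ∀ e, vlayer (lo e) = elayer e - 1
  vlayer_hi : ∀ e, vlayer (hi e) = elayer e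
  vlayer_s : vlayer s = 0
  eq_s : ∀ u, vlayer u = 0 → u = s
  vlayer_t : vlayer t = n
  eq_t : ∀ u, vlayer u = n → u = t
  card_up : ∀ u, vlayer u < n → #{e | lo e = u} = dplus (vlayer u)
  card_down : ∀ u, 1 ≤ vlayer u → #{e | hi e = u} = dminus (vlayer u)

def layerKet (n : ℕ) (elayer : E → ℕ) (W0 Wn1 : ℝ) (k : ℕ) : EuclideanSpace ℂ (E ⊕ Bool) :=
  ∑ e with elayer e = k, ket (Sum.inl e) +
  (if k = 0 then (√W0 : ℂ) • ket (Sum.inr false) else 0) +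
  (if k = n + 1 then (√Wn1 : ℂ) • ket (Sum.inr true) else 0)

def downDeg (hi : E → V) (s : V) (W0 : ℝ) (u : V) : ℝ :=
  #{e | hi e = u} + if u = s then W0 else 0

def upDeg (lo : E → V) (t : V) (Wn1 : ℝ) (u : V) : ℝ :=
  #{e | lo e = u} + if u = t then Wn1 else 0

section Graph

variable {n : ℕ} {vlayer : V → ℕ} {elayer : E → ℕ} {lo hi : E → V} {s t : V}
  {dplus dminus : ℕ → ℕ} {W0 Wn1 : ℝ}

@[simp] theorem Wt_zero : Wt n elayer W0 Wn1 0 = W0 := by simp [Wt]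

@[simp] theorem Wt_top : Wt n elayer W0 Wn1 (n + 1) = Wn1 := by simp [Wt]

theorem Wt_of_mem {k : ℕ} (hk : 1 ≤ k ∧ k ≤ n) : Wt n elayer W0 Wn1 k = #{e | elayer e = k} := by
  simp [Wt, show k ≠ 0 by omega, show k ≠ n + 1 by omega]

theorem Wt_pos (hW0 : 0 < W0) (hWn1 : 0 < Wn1)
    (hW : ∀ i, 1 ≤ i → i ≤ n → 0 < Wt n elayer W0 Wn1 i) {i : ℕ} (hi : i ≤ n + 1) :
    0 < Wt n elayer W0 Wn1 i := by
  obtain rfl | hi0 := Nat.eq_zero_or_pos i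
  · simpa using hW0
  obtain rfl | hin := eq_or_ne i (n + 1)
  · simpa using hWn1
  exact hW i hi0 (by omega)

theorem sqrt_Wt_smul_Lket (hG : IsHierarchical n vlayer elayer lo hi s t dplus dminus) {k : ℕ}
    (hk : k ≤ n + 1) (hW : 0 < Wt n elayer W0 Wn1 k) :
    (√(Wt n elayer W0 Wn1 k) : ℂ) • Lket n elayer W0 Wn1 k = layerKet n elayer W0 Wn1 k := by
  have hnone : ∀ e, elayer e ≠ 0 ∧ elayer e ≠ n + 1 := fun e => by have := hG.elayer_mem e; omega
  obtain rfl | hk0 := Nat.eq_zero_or_pos k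
  · simp [Lket, layerKet, hnone]
  obtain rfl | hkn := eq_or_ne k (n + 1)
  · simp [Lket, layerKet, hnone]
  have hsqrt : (√(Wt n elayer W0 Wn1 k) : ℂ) ≠ 0 := by simpa using (Real.sqrt_pos.2 hW).ne'
  simp [Lket, layerKet, hk0.ne', hkn, smul_smul, hsqrt]

theorem sum_psi_layer (hG : IsHierarchical n vlayer elayer lo hi s t dplus dminus) {i : ℕ}
    (hin : i ≤ n) :
    ∑ u with vlayer u = i, psi lo hi s t W0 Wn1 u
      = layerKet n elayer W0 Wn1 i + layerKet n elayer W0 Wn1 (i + 1) := by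
  have down : ∑ u with vlayer u = i, ∑ e with hi e = u, ket (Sum.inl e)
      = ∑ e with elayer e = i, (ket (Sum.inl e) : EuclideanSpace ℂ (E ⊕ Bool)) := by
    rw [sum_fiberwise_eq_sum_filter]
    simp [hG.vlayer_hi]
  have up : ∑ u with vlayer u = i, ∑ e with lo e = u, ket (Sum.inl e)
      = ∑ e with elayer e = i + 1, (ket (Sum.inl e) : EuclideanSpace ℂ (E ⊕ Bool)) := by
    rw [sum_fiberwise_eq_sum_filter]
    refine sum_congr (filter_congr fun e _ => ?_) fun _ _ => rfl
    have := hG.elayer_mem e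
    simp only [mem_filter, mem_univ, true_and, hG.vlayer_lo]
    omega
  simp only [psi, layerKet, sum_add_distrib, down, up, sum_ite_eq', mem_filter, mem_univ,
    true_and, hG.vlayer_s, hG.vlayer_t, eq_comm (a := (0 : ℕ)), eq_comm (a := n), add_left_inj,
    Nat.add_one_ne_zero, if_false, show i ≠ n + 1 by omega]
  abel

theorem inner_psi_ket (u : V) (x : E ⊕ Bool) :
    inner ℂ (psi lo hi s t W0 Wn1 u) (ket x) = starRingEnd ℂ (psi lo hi s t W0 Wn1 u x) := by
  simp [ket, EuclideanSpace.inner_single_right]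

theorem inner_psi_ket_inl (u : V) (e : E) :
    inner ℂ (psi lo hi s t W0 Wn1 u) (ket (Sum.inl e))
      = (if hi e = u then 1 else 0) + (if lo e = u then 1 else 0) := by
  rw [inner_psi_ket]
  simp [psi, ket, Pi.single_apply, apply_ite (fun v : EuclideanSpace ℂ (E ⊕ Bool) => v (Sum.inl e))]

theorem inner_psi_ket_inr_false (u : V) :
    inner ℂ (psi lo hi s t W0 Wn1 u) (ket (Sum.inr false)) = if u = s then (√W0 : ℂ) else 0 := by
  rw [inner_psi_ket]
  simp [psi, ket, apply_ite (fun v : EuclideanSpace ℂ (E ⊕ Bool) => v (Sum.inr false)),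
    apply_ite (starRingEnd ℂ)]

theorem inner_psi_ket_inr_true (u : V) :
    inner ℂ (psi lo hi s t W0 Wn1 u) (ket (Sum.inr true)) = if u = t then (√Wn1 : ℂ) else 0 := by
  rw [inner_psi_ket]
  simp [psi, ket, apply_ite (fun v : EuclideanSpace ℂ (E ⊕ Bool) => v (Sum.inr true)),
    apply_ite (starRingEnd ℂ)]

theorem card_filter_elayer_hi (hG : IsHierarchical n vlayer elayer lo hi s t dplus dminus)
    (k : ℕ) (u : V) :
    #{e | elayer e = k ∧ hi e = u} = if k = vlayer u then #{e | hi e = u} else 0 := by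
  split_ifs with hk
  · congr 1
    ext e
    simp only [mem_filter, mem_univ, true_and, and_iff_right_iff_imp]
    rintro rfl
    rw [hk, hG.vlayer_hi]
  · simp only [card_eq_zero, filter_eq_empty_iff, mem_univ, true_implies, not_and]
    rintro e rfl rfl
    exact hk (hG.vlayer_hi e).symm

theorem card_filter_elayer_lo (hG : IsHierarchical n vlayer elayer lo hi s t dplus dminus)
    (k : ℕ) (u : V) :
    #{e | elayer e = k ∧ lo e = u} = if k = vlayer u + 1 then #{e | lo e = u} else 0 := by
  split_ifs with hk
  · congr 1
    ext e
    simp only [mem_filter, mem_univ, true_and, and_iff_right_iff_imp]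
    rintro rfl
    have := hG.elayer_mem e
    have := hG.vlayer_lo e
    omega
  · simp only [card_eq_zero, filter_eq_empty_iff, mem_univ, true_implies, not_and]
    rintro e rfl rfl
    have := hG.elayer_mem e
    have := hG.vlayer_lo e
    omega

theorem inner_psi_layerKet (hG : IsHierarchical n vlayer elayer lo hi s t dplus dminus)
    (hW0 : 0 ≤ W0) (hWn1 : 0 ≤ Wn1) (u : V) (k : ℕ) :
    inner ℂ (psi lo hi s t W0 Wn1 u) (layerKet n elayer W0 Wn1 k)
      = (((if k = vlayer u then downDeg hi s W0 u else 0)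
          + (if k = vlayer u + 1 then upDeg lo t Wn1 u else 0) : ℝ) : ℂ) := by
  have hs : ∀ k, (if k = 0 then (√W0 : ℂ) * (if u = s then (√W0 : ℂ) else 0) else 0)
      = if k = vlayer u then (if u = s then (W0 : ℂ) else 0) else 0 := by
    intro k
    by_cases hus : u = s
    · subst hus
      simp [hG.vlayer_s, ← Complex.ofReal_mul, Real.mul_self_sqrt hW0]
    · simp [hus]
  have ht : ∀ k, (if k = n + 1 then (√Wn1 : ℂ) * (if u = t then (√Wn1 : ℂ) else 0) else 0)
      = if k = vlayer u + 1 then (if u = t then (Wn1 : ℂ) else 0) else 0 := by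
    intro k
    by_cases hut : u = t
    · subst hut
      simp [hG.vlayer_t, ← Complex.ofReal_mul, Real.mul_self_sqrt hWn1]
    · simp [hut]
  simp only [layerKet, inner_add_right, inner_sum, inner_psi_ket_inl, sum_add_distrib, sum_boole,
    filter_filter, card_filter_elayer_hi hG, card_filter_elayer_lo hG, apply_ite (inner ℂ _),
    inner_smul_right, inner_psi_ket_inr_false, inner_psi_ket_inr_true, inner_zero_right, hs, ht]
  split_ifs <;> first | omega | simp [downDeg, upDeg, *]

theorem card_vlayer_eq_one {u : V} (hu : ∀ v, vlayer v = vlayer u → v = u) :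
    #{v | vlayer v = vlayer u} = 1 :=
  card_eq_one.2 ⟨u, by ext v; simpa using ⟨hu v, fun h => h ▸ rfl⟩⟩

theorem card_elayer_eq_card_mul (g : E → V) (d : ℕ → ℕ) {i k : ℕ}
    (hg : ∀ e, vlayer (g e) = i ↔ elayer e = k)
    (hd : ∀ v, vlayer v = i → #{e | g e = v} = d i) :
    #{e | elayer e = k} = #{v | vlayer v = i} * d i := by
  calc #{e | elayer e = k} = #{e | g e ∈ ({v | vlayer v = i} : Finset V)} := by simp [hg]
    _ = ∑ v with vlayer v = i, #{e | g e = v} := (sum_card_fiberwise_eq_card_filter _ _ _).symm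
    _ = #{v | vlayer v = i} * d i := by
      rw [sum_congr rfl fun v hv => hd v (mem_filter.1 hv).2, sum_const, smul_eq_mul]

theorem card_mul_downDeg (hG : IsHierarchical n vlayer elayer lo hi s t dplus dminus) (u : V) :
    #{v | vlayer v = vlayer u} * downDeg hi s W0 u = Wt n elayer W0 Wn1 (vlayer u) := by
  rcases Nat.eq_zero_or_pos (vlayer u) with h0 | hpos
  · have hus := hG.eq_s u h0
    subst u
    have hnone : #{e | hi e = s} = 0 := by
      simp only [card_eq_zero, filter_eq_empty_iff, mem_univ, true_implies]
      intro e he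
      have := hG.vlayer_hi e
      have := hG.elayer_mem e
      rw [he, hG.vlayer_s] at *
      omega
    rw [card_vlayer_eq_one fun v hv => hG.eq_s v (hv.trans h0)]
    simp [downDeg, hnone, h0]
  · have hus : u ≠ s := by rintro rfl; simp [hG.vlayer_s] at hpos
    rw [Wt_of_mem ⟨hpos, hG.vlayer_le u⟩, card_elayer_eq_card_mul (vlayer := vlayer) hi dminus
      (fun e => by rw [hG.vlayer_hi]) (fun v hv => hv ▸ hG.card_down v (hv ▸ hpos))]
    simp [downDeg, hus, hG.card_down u hpos]

theorem card_mul_upDeg (hG : IsHierarchical n vlayer elayer lo hi s t dplus dminus) (u : V) :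
    #{v | vlayer v = vlayer u} * upDeg lo t Wn1 u = Wt n elayer W0 Wn1 (vlayer u + 1) := by
  rcases (hG.vlayer_le u).eq_or_lt with hn | hlt
  · have hut := hG.eq_t u hn
    subst u
    have hnone : #{e | lo e = t} = 0 := by
      simp only [card_eq_zero, filter_eq_empty_iff, mem_univ, true_implies]
      intro e he
      have := hG.vlayer_lo e
      have := hG.elayer_mem e
      rw [he, hG.vlayer_t] at *
      omega
    rw [card_vlayer_eq_one fun v hv => hG.eq_t v (hv.trans hn)]
    simp [upDeg, hnone, hn]
  · have hut : u ≠ t := by rintro rfl; simp [hG.vlayer_t] at hlt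
    rw [Wt_of_mem ⟨by omega, hlt⟩, card_elayer_eq_card_mul (vlayer := vlayer) lo dplus
      (fun e => by have := hG.elayer_mem e; rw [hG.vlayer_lo]; omega)
      (fun v hv => hv ▸ hG.card_up v (hv ▸ hlt))]
    simp [upDeg, hut, hG.card_up u hlt]

theorem Lket_eq_inv_smul_layerKet (hG : IsHierarchical n vlayer elayer lo hi s t dplus dminus)
    {k : ℕ} (hk : k ≤ n + 1) (hW : 0 < Wt n elayer W0 Wn1 k) :
    Lket n elayer W0 Wn1 k = ((√(Wt n elayer W0 Wn1 k))⁻¹ : ℂ) • layerKet n elayer W0 Wn1 k := by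
  have hsqrt : (√(Wt n elayer W0 Wn1 k) : ℂ) ≠ 0 := by simpa using (Real.sqrt_pos.2 hW).ne'
  rw [← sqrt_Wt_smul_Lket hG hk hW, smul_smul, inv_mul_cancel₀ hsqrt, one_smul]

theorem pair_mem_span (hG : IsHierarchical n vlayer elayer lo hi s t dplus dminus)
    (hW : ∀ i ≤ n + 1, 0 < Wt n elayer W0 Wn1 i) {c : ℕ → ℝ} {i : ℕ} (hin : i ≤ n)
    (hc : c i * √(Wt n elayer W0 Wn1 (i + 1)) = c (i + 1) * √(Wt n elayer W0 Wn1 i)) :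
    (c i : ℂ) • Lket n elayer W0 Wn1 i + (c (i + 1) : ℂ) • Lket n elayer W0 Wn1 (i + 1)
      ∈ Submodule.span ℂ (psi lo hi s t W0 Wn1 '' {u | vlayer u % 2 = i % 2}) := by
  have hρ : 0 < √(Wt n elayer W0 Wn1 i) := Real.sqrt_pos.2 (hW i (by omega))
  have hρ' : 0 < √(Wt n elayer W0 Wn1 (i + 1)) := Real.sqrt_pos.2 (hW (i + 1) (by omega))
  have hpair : (c i : ℂ) • Lket n elayer W0 Wn1 i + (c (i + 1) : ℂ) • Lket n elayer W0 Wn1 (i + 1)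
      = ((c i / √(Wt n elayer W0 Wn1 i) : ℝ) : ℂ)
        • ∑ u with vlayer u = i, psi lo hi s t W0 Wn1 u := by
    have h1 : c i / √(Wt n elayer W0 Wn1 i) * √(Wt n elayer W0 Wn1 i) = c i := by field_simp
    have h2 : c i / √(Wt n elayer W0 Wn1 i) * √(Wt n elayer W0 Wn1 (i + 1)) = c (i + 1) := by
      field_simp
      linarith
    rw [sum_psi_layer hG hin, ← sqrt_Wt_smul_Lket hG (by omega) (hW i (by omega)),
      ← sqrt_Wt_smul_Lket hG (by omega) (hW (i + 1) (by omega)), smul_add, smul_smul,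
      smul_smul, ← Complex.ofReal_mul, ← Complex.ofReal_mul, h1, h2]
  rw [hpair]
  refine Submodule.smul_mem _ _ (Submodule.sum_mem _ fun u hu => Submodule.subset_span ?_)
  exact ⟨u, by simp_all, rfl⟩

theorem inner_psi_Lket (hG : IsHierarchical n vlayer elayer lo hi s t dplus dminus)
    (hW : ∀ i ≤ n + 1, 0 < Wt n elayer W0 Wn1 i) (u : V) {k : ℕ} (hk : k ≤ n + 1) :
    inner ℂ (psi lo hi s t W0 Wn1 u) (Lket n elayer W0 Wn1 k)
      = ((if k = vlayer u ∨ k = vlayer u + 1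
          then √(Wt n elayer W0 Wn1 k) / #{v | vlayer v = vlayer u} else 0 : ℝ) : ℂ) := by
  have hW0 : 0 ≤ W0 := by simpa using (hW 0 (by omega)).le
  have hWn1 : 0 ≤ Wn1 := by simpa using (hW (n + 1) le_rfl).le
  have hS : (#{v | vlayer v = vlayer u} : ℝ) ≠ 0 := by
    exact_mod_cast (card_pos.2 ⟨u, by simp⟩).ne'
  have hρ := (Real.sqrt_pos.2 (hW k hk)).ne'
  rw [Lket_eq_inv_smul_layerKet hG hk (hW k hk), inner_smul_right, inner_psi_layerKet hG hW0 hWn1,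
    ← Complex.ofReal_inv, ← Complex.ofReal_mul, Complex.ofReal_inj]
  rcases eq_or_ne k (vlayer u) with rfl | h1
  · rw [if_pos (Or.inl rfl), if_pos rfl, if_neg (by omega), add_zero, eq_div_iff hS,
      mul_assoc, mul_comm (downDeg hi s W0 u), card_mul_downDeg hG]
    field_simp
    exact (Real.sq_sqrt (hW _ hk).le).symm
  rcases eq_or_ne k (vlayer u + 1) with rfl | h2
  · rw [if_pos (Or.inr rfl), if_pos rfl, if_neg h1, zero_add, eq_div_iff hS,
      mul_assoc, mul_comm (upDeg lo t Wn1 u), card_mul_upDeg hG]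
    field_simp
    exact (Real.sq_sqrt (hW _ hk).le).symm
  simp [h1, h2]

theorem inner_psi_pair_eq_zero (hG : IsHierarchical n vlayer elayer lo hi s t dplus dminus)
    (hW : ∀ i ≤ n + 1, 0 < Wt n elayer W0 Wn1 i) {c : ℕ → ℝ} {i : ℕ} (hin : i ≤ n) {u : V}
    (hu : vlayer u % 2 = i % 2)
    (hc : c i * √(Wt n elayer W0 Wn1 i) + c (i + 1) * √(Wt n elayer W0 Wn1 (i + 1)) = 0) :
    inner ℂ (psi lo hi s t W0 Wn1 u)
        ((c i : ℂ) • Lket n elayer W0 Wn1 i + (c (i + 1) : ℂ) • Lket n elayer W0 Wn1 (i + 1))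
      = 0 := by
  rw [inner_add_right, inner_smul_right, inner_smul_right, inner_psi_Lket hG hW u (by omega),
    inner_psi_Lket hG hW u (by omega)]
  by_cases hl : i = vlayer u
  · subst hl
    have hc' := congrArg (fun x : ℝ => (x / #{v | vlayer v = vlayer u} : ℂ)) hc
    simp only [if_pos, true_or, or_true] at hc' ⊢
    push_cast at hc' ⊢
    linear_combination hc'
  · simp [hl, show i ≠ vlayer u + 1 by omega, show i + 1 ≠ vlayer u by omega]

theorem inner_sum_ket_sum_ket (F G : Finset E) :
    inner ℂ (∑ e ∈ F, (ket (Sum.inl e) : EuclideanSpace ℂ (E ⊕ Bool))) (∑ e ∈ G, ket (Sum.inl e))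
      = #(F ∩ G) := by
  simp [ket, EuclideanSpace.inner_single_left, inter_comm G F]

theorem inner_Lket_Lket {j k : ℕ} (hj : 1 ≤ j ∧ j ≤ n) (hk : 1 ≤ k ∧ k ≤ n)
    (hW : 0 < Wt n elayer W0 Wn1 j) :
    inner ℂ (Lket n elayer W0 Wn1 j) (Lket n elayer W0 Wn1 k) = if j = k then 1 else 0 := by
  simp only [Lket, show j ≠ 0 by omega, show j ≠ n + 1 by omega, show k ≠ 0 by omega,
    show k ≠ n + 1 by omega, if_false, inner_smul_left, inner_smul_right, inner_sum_ket_sum_ket]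
  split_ifs with hjk
  · subst hjk
    have hρ := (Real.sqrt_pos.2 hW).ne'
    have hcard : (#{e | elayer e = j} : ℂ)
        = ((√(Wt n elayer W0 Wn1 j) * √(Wt n elayer W0 Wn1 j) : ℝ) : ℂ) := by
      rw [Real.mul_self_sqrt hW.le, Wt_of_mem hj]
      norm_cast
    rw [inter_self, hcard]
    simp [hρ]
  · rw [← filter_and, filter_false_of_mem fun e _ h => hjk (h.1.symm.trans h.2)]
    simp

end Graph

def layerSum (n : ℕ) (elayer : E → ℕ) (W0 Wn1 : ℝ) (c : ℕ → ℝ) (a b : ℕ) :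
    EuclideanSpace ℂ (E ⊕ Bool) :=
  ∑ k ∈ Ico a b, (c k : ℂ) • Lket n elayer W0 Wn1 k

section LayerSum

variable {n : ℕ} {vlayer : V → ℕ} {elayer : E → ℕ} {lo hi : E → V} {s t : V}
  {dplus dminus : ℕ → ℕ} {W0 Wn1 : ℝ}

theorem layerSum_mem_span (hG : IsHierarchical n vlayer elayer lo hi s t dplus dminus)
    (hW : ∀ i ≤ n + 1, 0 < Wt n elayer W0 Wn1 i) {c : ℕ → ℝ} {r m b : ℕ} (hb : r + 2 * m = b)
    (hbn : b ≤ n + 2)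
    (hc : ∀ j < m, c (r + 2 * j) * √(Wt n elayer W0 Wn1 (r + 2 * j + 1))
      = c (r + 2 * j + 1) * √(Wt n elayer W0 Wn1 (r + 2 * j))) :
    layerSum n elayer W0 Wn1 c r b
      ∈ Submodule.span ℂ (psi lo hi s t W0 Wn1 '' {u | vlayer u % 2 = r % 2}) := by
  subst hb
  refine sum_Ico_mem_of_pairs (Submodule.span ℂ _).toAddSubmonoid _ r m fun j hj => ?_
  simpa [Nat.add_mul_mod_self_left] using pair_mem_span hG hW (by omega) (hc j hj)

theorem inner_psi_layerSum_eq_zero (hG : IsHierarchical n vlayer elayer lo hi s t dplus dminus)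
    (hW : ∀ i ≤ n + 1, 0 < Wt n elayer W0 Wn1 i) {c : ℕ → ℝ} {r m b : ℕ} (hb : r + 2 * m = b)
    (hbn : b ≤ n + 2) {u : V} (hu : vlayer u % 2 = r % 2)
    (hc : ∀ j < m, c (r + 2 * j) * √(Wt n elayer W0 Wn1 (r + 2 * j))
      + c (r + 2 * j + 1) * √(Wt n elayer W0 Wn1 (r + 2 * j + 1)) = 0) :
    inner ℂ (psi lo hi s t W0 Wn1 u) (layerSum n elayer W0 Wn1 c r b) = 0 := by
  subst hb
  have := sum_Ico_mem_of_pairs (LinearMap.ker (innerₛₗ ℂ (psi lo hi s t W0 Wn1 u))).toAddSubmonoid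
    (fun k => (c k : ℂ) • Lket n elayer W0 Wn1 k) r m fun j hj =>
      inner_psi_pair_eq_zero hG hW (by omega) (by rwa [Nat.add_mul_mod_self_left]) (hc j hj)
  simpa [layerSum, inner_sum, inner_smul_right] using this

theorem layerSum_eq_Lket_zero_add {c : ℕ → ℝ} (hc : c 0 = 1) :
    layerSum n elayer W0 Wn1 c 0 (n + 1)
      = Lket n elayer W0 Wn1 0 + layerSum n elayer W0 Wn1 c 1 (n + 1) := by
  rw [layerSum, sum_eq_sum_Ico_succ_bot (by omega), hc, Complex.ofReal_one, one_smul, layerSum]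

theorem layerSum_eq_add_Lket_top {c : ℕ → ℝ} {x : ℝ} (hc : c (n + 1) = x) :
    layerSum n elayer W0 Wn1 c 1 (n + 2)
      = layerSum n elayer W0 Wn1 c 1 (n + 1) + (x : ℂ) • Lket n elayer W0 Wn1 (n + 1) := by
  rw [layerSum, sum_Ico_succ_top (by omega), hc, layerSum]

theorem layerSum_midpoint (p q : ℕ → ℝ) (a b : ℕ) :
    layerSum n elayer W0 Wn1 (fun k => (p k + q k) / 2) a b
      = (1 / 2 : ℂ) • (layerSum n elayer W0 Wn1 p a b + layerSum n elayer W0 Wn1 q a b) := by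
  simp only [layerSum, smul_sum, ← sum_add_distrib]
  refine sum_congr rfl fun k _ => ?_
  push_cast
  module

theorem layerSum_mem_span_ket (c : ℕ → ℝ) :
    layerSum n elayer W0 Wn1 c 1 (n + 1)
      ∈ Submodule.span ℂ
          (Set.range fun e : E => (ket (Sum.inl e) : EuclideanSpace ℂ (E ⊕ Bool))) := by
  refine Submodule.sum_mem _ fun k hk => Submodule.smul_mem _ _ ?_
  rw [mem_Ico] at hk
  simp only [Lket, show k ≠ 0 by omega, show k ≠ n + 1 by omega, if_false]
  exact Submodule.smul_mem _ _ (Submodule.sum_mem _ fun e _ => Submodule.subset_span ⟨e, rfl⟩)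

theorem norm_layerSum_sq (hW : ∀ i ≤ n + 1, 0 < Wt n elayer W0 Wn1 i) (c : ℕ → ℝ) :
    ‖layerSum n elayer W0 Wn1 c 1 (n + 1)‖ ^ 2 = ∑ k ∈ Ico 1 (n + 1), c k ^ 2 := by
  have hortho : ∀ j ∈ Ico 1 (n + 1), ∀ k ∈ Ico 1 (n + 1),
      inner ℂ (Lket n elayer W0 Wn1 j) (Lket n elayer W0 Wn1 k) = if j = k then 1 else 0 :=
    fun j hj k hk => by
      rw [mem_Ico] at hj hk
      exact inner_Lket_Lket ⟨hj.1, by omega⟩ ⟨hk.1, by omega⟩ (hW j (by omega))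
  have hinner :
      inner ℂ (layerSum n elayer W0 Wn1 c 1 (n + 1)) (layerSum n elayer W0 Wn1 c 1 (n + 1))
        = ((∑ k ∈ Ico 1 (n + 1), c k ^ 2 : ℝ) : ℂ) := by
    simp only [layerSum, sum_inner, inner_sum, inner_smul_left, inner_smul_right]
    push_cast
    refine sum_congr rfl fun k hk => ?_
    rw [sum_congr rfl fun j hj => by rw [hortho j hj k hk]]
    simp [hk, sq]
  rw [@norm_sq_eq_re_inner ℂ, hinner]
  exact RCLike.ofReal_re _

end LayerSum

def ampA (n : ℕ) (elayer : E → ℕ) (W0 Wn1 : ℝ) (k : ℕ) : ℝ :=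
  (-1) ^ (k / 2) * √(C n elayer W0 Wn1 k)

def ampB (n : ℕ) (elayer : E → ℕ) (W0 Wn1 : ℝ) (k : ℕ) : ℝ :=
  (-1) ^ ((k + 1) / 2) / √(C n elayer W0 Wn1 k)

section Amplitudes

variable {n : ℕ} {elayer : E → ℕ} {W0 Wn1 : ℝ}

theorem C_zero : C n elayer W0 Wn1 0 = 1 := by simp [C]

theorem C_succ (k : ℕ) : C n elayer W0 Wn1 (k + 1) = C n elayer W0 Wn1 k
    * (Wt n elayer W0 Wn1 k / Wt n elayer W0 Wn1 (k + 1)) ^ ((-1 : ℤ) ^ (k + 1)) := by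
  rw [C, C, prod_Icc_succ_top (by omega), Nat.add_sub_cancel]

theorem C_pos (hW : ∀ i ≤ n + 1, 0 < Wt n elayer W0 Wn1 i) {k : ℕ} (hk : k ≤ n + 1) :
    0 < C n elayer W0 Wn1 k :=
  prod_pos fun i hi => by
    rw [mem_Icc] at hi
    exact zpow_pos (div_pos (hW (i - 1) (by omega)) (hW i (by omega))) _

theorem sqrt_C_mul_sqrt_Wt_of_even (hW : ∀ i ≤ n + 1, 0 < Wt n elayer W0 Wn1 i) {k : ℕ}
    (hk : Even k) (hkn : k ≤ n) :
    √(C n elayer W0 Wn1 k) * √(Wt n elayer W0 Wn1 (k + 1))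
      = √(C n elayer W0 Wn1 (k + 1)) * √(Wt n elayer W0 Wn1 k) := by
  have hWk := hW k (by omega)
  have hWk' := hW (k + 1) (by omega)
  have hC : C n elayer W0 Wn1 k * Wt n elayer W0 Wn1 (k + 1)
      = C n elayer W0 Wn1 (k + 1) * Wt n elayer W0 Wn1 k := by
    rw [C_succ, (hk.add_one).neg_one_pow, zpow_neg_one, inv_div]
    field_simp
  rw [← Real.sqrt_mul (C_pos hW (by omega)).le, ← Real.sqrt_mul (C_pos hW (by omega)).le, hC]

theorem sqrt_C_mul_sqrt_Wt_of_odd (hW : ∀ i ≤ n + 1, 0 < Wt n elayer W0 Wn1 i) {k : ℕ}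
    (hk : Odd k) (hkn : k ≤ n) :
    √(C n elayer W0 Wn1 k) * √(Wt n elayer W0 Wn1 k)
      = √(C n elayer W0 Wn1 (k + 1)) * √(Wt n elayer W0 Wn1 (k + 1)) := by
  have hWk := hW k (by omega)
  have hWk' := hW (k + 1) (by omega)
  have hC : C n elayer W0 Wn1 k * Wt n elayer W0 Wn1 k
      = C n elayer W0 Wn1 (k + 1) * Wt n elayer W0 Wn1 (k + 1) := by
    rw [C_succ, (hk.add_one).neg_one_pow, zpow_one]
    field_simp
  rw [← Real.sqrt_mul (C_pos hW (by omega)).le, ← Real.sqrt_mul (C_pos hW (by omega)).le, hC]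

theorem ampA_pair_of_even (hW : ∀ i ≤ n + 1, 0 < Wt n elayer W0 Wn1 i) {i : ℕ} (hi : Even i)
    (hin : i ≤ n) :
    ampA n elayer W0 Wn1 i * √(Wt n elayer W0 Wn1 (i + 1))
      = ampA n elayer W0 Wn1 (i + 1) * √(Wt n elayer W0 Wn1 i) := by
  obtain ⟨j, rfl⟩ := hi
  rw [ampA, ampA, show (j + j + 1) / 2 = (j + j) / 2 by omega, mul_assoc, mul_assoc,
    sqrt_C_mul_sqrt_Wt_of_even hW ⟨j, rfl⟩ hin]

theorem ampB_pair_of_even (hW : ∀ i ≤ n + 1, 0 < Wt n elayer W0 Wn1 i) {i : ℕ} (hi : Even i)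
    (hin : i ≤ n) :
    ampB n elayer W0 Wn1 i * √(Wt n elayer W0 Wn1 i)
      + ampB n elayer W0 Wn1 (i + 1) * √(Wt n elayer W0 Wn1 (i + 1)) = 0 := by
  have hσ := Real.sqrt_pos.2 (C_pos hW (show i ≤ n + 1 by omega))
  have hσ' := Real.sqrt_pos.2 (C_pos hW (show i + 1 ≤ n + 1 by omega))
  have hrel := sqrt_C_mul_sqrt_Wt_of_even hW hi hin
  obtain ⟨j, rfl⟩ := hi
  rw [ampB, ampB, show (j + j + 1 + 1) / 2 = (j + j + 1) / 2 + 1 by omega, pow_succ]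
  field_simp
  linear_combination (-(-1 : ℝ) ^ ((j + j + 1) / 2)) * hrel

theorem ampA_pair_of_odd (hW : ∀ i ≤ n + 1, 0 < Wt n elayer W0 Wn1 i) {i : ℕ} (hi : Odd i)
    (hin : i ≤ n) :
    ampA n elayer W0 Wn1 i * √(Wt n elayer W0 Wn1 i)
      + ampA n elayer W0 Wn1 (i + 1) * √(Wt n elayer W0 Wn1 (i + 1)) = 0 := by
  have hrel := sqrt_C_mul_sqrt_Wt_of_odd hW hi hin
  obtain ⟨j, rfl⟩ := hi
  rw [ampA, ampA, show (2 * j + 1 + 1) / 2 = (2 * j + 1) / 2 + 1 by omega, pow_succ]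
  linear_combination (-1 : ℝ) ^ ((2 * j + 1) / 2) * hrel

theorem ampB_pair_of_odd (hW : ∀ i ≤ n + 1, 0 < Wt n elayer W0 Wn1 i) {i : ℕ} (hi : Odd i)
    (hin : i ≤ n) :
    ampB n elayer W0 Wn1 i * √(Wt n elayer W0 Wn1 (i + 1))
      = ampB n elayer W0 Wn1 (i + 1) * √(Wt n elayer W0 Wn1 i) := by
  have hσ := Real.sqrt_pos.2 (C_pos hW (show i ≤ n + 1 by omega))
  have hσ' := Real.sqrt_pos.2 (C_pos hW (show i + 1 ≤ n + 1 by omega))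
  have hrel := sqrt_C_mul_sqrt_Wt_of_odd hW hi hin
  obtain ⟨j, rfl⟩ := hi
  rw [ampB, ampB, show (2 * j + 1 + 1 + 1) / 2 = (2 * j + 1 + 1) / 2 by omega,
    div_mul_eq_mul_div, div_mul_eq_mul_div, div_eq_div_iff hσ.ne' hσ'.ne']
  linear_combination (-(-1 : ℝ) ^ ((2 * j + 1 + 1) / 2)) * hrel

theorem ampA_zero : ampA n elayer W0 Wn1 0 = 1 := by simp [ampA, C_zero]

theorem ampB_zero : ampB n elayer W0 Wn1 0 = 1 := by simp [ampB, C_zero]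

theorem ampA_top (hC : C n elayer W0 Wn1 (n + 1) = 1) :
    ampA n elayer W0 Wn1 (n + 1) = (-1) ^ ((n + 1) / 2) := by
  simp [ampA, hC]

theorem ampB_top (hn : Odd n) (hC : C n elayer W0 Wn1 (n + 1) = 1) :
    ampB n elayer W0 Wn1 (n + 1) = (-1) ^ ((n + 1) / 2) := by
  obtain ⟨j, rfl⟩ := hn
  simp [ampB, hC, show (2 * j + 1 + 1 + 1) / 2 = (2 * j + 1 + 1) / 2 by omega]

theorem sq_amp_midpoint_le (hW : ∀ i ≤ n + 1, 0 < Wt n elayer W0 Wn1 i) {k : ℕ} (hk : k ≤ n + 1) :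
    ((ampA n elayer W0 Wn1 k + ampB n elayer W0 Wn1 k) / 2) ^ 2
      ≤ 1 / 2 * (C n elayer W0 Wn1 k + 1 / C n elayer W0 Wn1 k) := by
  have hCk := C_pos hW hk
  have hA : ampA n elayer W0 Wn1 k ^ 2 = C n elayer W0 Wn1 k := by
    rw [ampA, mul_pow, ← pow_mul, Even.neg_one_pow ⟨k / 2, by ring⟩, one_mul, Real.sq_sqrt hCk.le]
  have hB : ampB n elayer W0 Wn1 k ^ 2 = 1 / C n elayer W0 Wn1 k := by
    rw [ampB, div_pow, ← pow_mul, Even.neg_one_pow ⟨(k + 1) / 2, by ring⟩, Real.sq_sqrt hCk.le]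
  calc ((ampA n elayer W0 Wn1 k + ampB n elayer W0 Wn1 k) / 2) ^ 2
      = (ampA n elayer W0 Wn1 k + ampB n elayer W0 Wn1 k) ^ 2 / 4 := by ring
    _ ≤ 2 * (ampA n elayer W0 Wn1 k ^ 2 + ampB n elayer W0 Wn1 k ^ 2) / 4 := by
      gcongr
      exact add_sq_le
    _ = 1 / 2 * (C n elayer W0 Wn1 k + 1 / C n elayer W0 Wn1 k) := by rw [hA, hB]; ring

end Amplitudes

section Eigenvectors

variable {n : ℕ} {vlayer : V → ℕ} {elayer : E → ℕ} {lo hi : E → V} {s t : V}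
  {dplus dminus : ℕ → ℕ} {W0 Wn1 : ℝ}

theorem apply_layerSum_ampA_eq_neg_of_even
    (hG : IsHierarchical n vlayer elayer lo hi s t dplus dminus)
    (hW : ∀ i ≤ n + 1, 0 < Wt n elayer W0 Wn1 i) (hn : Odd n)
    (R : EuclideanSpace ℂ (E ⊕ Bool) →ₗ[ℂ] EuclideanSpace ℂ (E ⊕ Bool))
    (hneg : ∀ u, Even (vlayer u) → R (psi lo hi s t W0 Wn1 u) = -psi lo hi s t W0 Wn1 u) :
    R (Lket n elayer W0 Wn1 0 + layerSum n elayer W0 Wn1 (ampA n elayer W0 Wn1) 1 (n + 1))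
      = -(Lket n elayer W0 Wn1 0 + layerSum n elayer W0 Wn1 (ampA n elayer W0 Wn1) 1 (n + 1)) := by
  obtain ⟨m, hm⟩ : ∃ m, 0 + 2 * m = n + 1 := ⟨(n + 1) / 2, by obtain ⟨j, rfl⟩ := hn; omega⟩
  rw [← layerSum_eq_Lket_zero_add ampA_zero]
  exact apply_eq_neg_of_mem_span R (fun u (hu : vlayer u % 2 = 0 % 2) => hneg u (Nat.even_iff.2 hu))
    (layerSum_mem_span hG hW hm (by omega) fun j _ =>
      ampA_pair_of_even hW (i := 0 + 2 * j) ⟨j, by ring⟩ (by omega))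

theorem apply_layerSum_ampB_eq_self_of_even
    (hG : IsHierarchical n vlayer elayer lo hi s t dplus dminus)
    (hW : ∀ i ≤ n + 1, 0 < Wt n elayer W0 Wn1 i) (hn : Odd n)
    (R : EuclideanSpace ℂ (E ⊕ Bool) →ₗ[ℂ] EuclideanSpace ℂ (E ⊕ Bool))
    (hid : ∀ x, (∀ u, Even (vlayer u) → inner ℂ (psi lo hi s t W0 Wn1 u) x = 0) → R x = x) :
    R (Lket n elayer W0 Wn1 0 + layerSum n elayer W0 Wn1 (ampB n elayer W0 Wn1) 1 (n + 1))
      = Lket n elayer W0 Wn1 0 + layerSum n elayer W0 Wn1 (ampB n elayer W0 Wn1) 1 (n + 1) := by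
  obtain ⟨m, hm⟩ : ∃ m, 0 + 2 * m = n + 1 := ⟨(n + 1) / 2, by obtain ⟨j, rfl⟩ := hn; omega⟩
  rw [← layerSum_eq_Lket_zero_add ampB_zero]
  exact hid _ fun u hu => inner_psi_layerSum_eq_zero hG hW hm (by omega) (Nat.even_iff.1 hu)
    fun j _ => ampB_pair_of_even hW (i := 0 + 2 * j) ⟨j, by ring⟩ (by omega)

theorem apply_layerSum_ampA_eq_self_of_odd
    (hG : IsHierarchical n vlayer elayer lo hi s t dplus dminus)
    (hW : ∀ i ≤ n + 1, 0 < Wt n elayer W0 Wn1 i) (hn : Odd n) (hC : C n elayer W0 Wn1 (n + 1) = 1)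
    (R : EuclideanSpace ℂ (E ⊕ Bool) →ₗ[ℂ] EuclideanSpace ℂ (E ⊕ Bool))
    (hid : ∀ x, (∀ u, Odd (vlayer u) → inner ℂ (psi lo hi s t W0 Wn1 u) x = 0) → R x = x) :
    R (layerSum n elayer W0 Wn1 (ampA n elayer W0 Wn1) 1 (n + 1)
        + (-1 : ℂ) ^ ((n + 1) / 2) • Lket n elayer W0 Wn1 (n + 1))
      = layerSum n elayer W0 Wn1 (ampA n elayer W0 Wn1) 1 (n + 1)
        + (-1 : ℂ) ^ ((n + 1) / 2) • Lket n elayer W0 Wn1 (n + 1) := by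
  obtain ⟨m, hm⟩ : ∃ m, 1 + 2 * m = n + 2 := ⟨(n + 1) / 2, by obtain ⟨j, rfl⟩ := hn; omega⟩
  have htop := layerSum_eq_add_Lket_top (elayer := elayer) (W0 := W0) (Wn1 := Wn1) (ampA_top hC)
  push_cast at htop
  rw [← htop]
  exact hid _ fun u hu => inner_psi_layerSum_eq_zero hG hW hm le_rfl (Nat.odd_iff.1 hu)
    fun j _ => ampA_pair_of_odd hW (i := 1 + 2 * j) ⟨j, by ring⟩ (by omega)

theorem apply_layerSum_ampB_eq_neg_of_odd
    (hG : IsHierarchical n vlayer elayer lo hi s t dplus dminus)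
    (hW : ∀ i ≤ n + 1, 0 < Wt n elayer W0 Wn1 i) (hn : Odd n) (hC : C n elayer W0 Wn1 (n + 1) = 1)
    (R : EuclideanSpace ℂ (E ⊕ Bool) →ₗ[ℂ] EuclideanSpace ℂ (E ⊕ Bool))
    (hneg : ∀ u, Odd (vlayer u) → R (psi lo hi s t W0 Wn1 u) = -psi lo hi s t W0 Wn1 u) :
    R (layerSum n elayer W0 Wn1 (ampB n elayer W0 Wn1) 1 (n + 1)
        + (-1 : ℂ) ^ ((n + 1) / 2) • Lket n elayer W0 Wn1 (n + 1))
      = -(layerSum n elayer W0 Wn1 (ampB n elayer W0 Wn1) 1 (n + 1)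
        + (-1 : ℂ) ^ ((n + 1) / 2) • Lket n elayer W0 Wn1 (n + 1)) := by
  obtain ⟨m, hm⟩ : ∃ m, 1 + 2 * m = n + 2 := ⟨(n + 1) / 2, by obtain ⟨j, rfl⟩ := hn; omega⟩
  have htop := layerSum_eq_add_Lket_top (elayer := elayer) (W0 := W0) (Wn1 := Wn1) (ampB_top hn hC)
  push_cast at htop
  rw [← htop]
  exact apply_eq_neg_of_mem_span R (fun u (hu : vlayer u % 2 = 1 % 2) => hneg u (Nat.odd_iff.2 hu))
    (layerSum_mem_span hG hW hm le_rfl fun j _ =>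
      ampB_pair_of_odd hW (i := 1 + 2 * j) ⟨j, by ring⟩ (by omega))

theorem norm_sq_layerSum_amp_le (hW : ∀ i ≤ n + 1, 0 < Wt n elayer W0 Wn1 i) :
    ‖layerSum n elayer W0 Wn1
        (fun k => (ampA n elayer W0 Wn1 k + ampB n elayer W0 Wn1 k) / 2) 1 (n + 1)‖ ^ 2
      ≤ 1 / 2 * ∑ k ∈ Icc 1 n, (C n elayer W0 Wn1 k + 1 / C n elayer W0 Wn1 k) := by
  rw [norm_layerSum_sq hW, ← Ico_add_one_right_eq_Icc, mul_sum]
  exact sum_le_sum fun k hk => sq_amp_midpoint_le hW (by simp at hk; omega)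

end Eigenvectors

theorem hierarchical_transduction
    (n : ℕ) (vlayer : V → ℕ) (elayer : E → ℕ) (lo hi : E → V) (s t : V)
    (W0 Wn1 : ℝ) (hW0 : 0 < W0) (hWn1 : 0 < Wn1)
    (hvl : ∀ u, vlayer u ≤ n)
    (hel : ∀ e, 1 ≤ elayer e ∧ elayer e ≤ n)
    (hlo : ∀ e, vlayer (lo e) = elayer e - 1)
    (hhi : ∀ e, vlayer (hi e) = elayer e)
    (hs : vlayer s = 0) (hsu : ∀ u, vlayer u = 0 → u = s)
    (ht : vlayer t = n) (htu : ∀ u, vlayer u = n → u = t)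
    (dplus dminus : ℕ → ℕ)
    (hdp : ∀ u, vlayer u < n →
        (Finset.univ.filter fun e => lo e = u).card = dplus (vlayer u))
    (hdm : ∀ u, 1 ≤ vlayer u →
        (Finset.univ.filter fun e => hi e = u).card = dminus (vlayer u))
    (hn : Odd n)
    (hWpos : ∀ i, 1 ≤ i → i ≤ n → 0 < Wt n elayer W0 Wn1 i)
    (hC : C n elayer W0 Wn1 (n + 1) = 1)
    (RA RB : EuclideanSpace ℂ (E ⊕ Bool) →ₗ[ℂ] EuclideanSpace ℂ (E ⊕ Bool))
    (hRAneg : ∀ u, Even (vlayer u) → RA (psi lo hi s t W0 Wn1 u) = -psi lo hi s t W0 Wn1 u)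
    (hRAid : ∀ x, (∀ u, Even (vlayer u) → (inner ℂ (psi lo hi s t W0 Wn1 u) x : ℂ) = 0) →
        RA x = x)
    (hRBneg : ∀ u, Odd (vlayer u) → RB (psi lo hi s t W0 Wn1 u) = -psi lo hi s t W0 Wn1 u)
    (hRBid : ∀ x, (∀ u, Odd (vlayer u) → (inner ℂ (psi lo hi s t W0 Wn1 u) x : ℂ) = 0) →
        RB x = x) :
    ∃ v ∈ Submodule.span ℂ
        (Set.range (fun e : E => ket (Sum.inl e) : E → EuclideanSpace ℂ (E ⊕ Bool))),
      ‖v‖ ^ 2 ≤ (1 / 2) * ∑ k ∈ Finset.Icc 1 n,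
          (C n elayer W0 Wn1 k + 1 / C n elayer W0 Wn1 k) ∧
      -(RB (RA (Lket n elayer W0 Wn1 0 + v)))
        = ((-1 : ℂ) ^ ((n + 1) / 2)) • Lket n elayer W0 Wn1 (n + 1) + v := by
  have hG : IsHierarchical n vlayer elayer lo hi s t dplus dminus :=
    ⟨hvl, hel, hlo, hhi, hs, hsu, ht, htu, hdp, hdm⟩
  have hW : ∀ i ≤ n + 1, 0 < Wt n elayer W0 Wn1 i := fun i hi => Wt_pos hW0 hWn1 hWpos hi
  refine ⟨layerSum n elayer W0 Wn1
      (fun k => (ampA n elayer W0 Wn1 k + ampB n elayer W0 Wn1 k) / 2) 1 (n + 1),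
    layerSum_mem_span_ket _, norm_sq_layerSum_amp_le hW, ?_⟩
  rw [layerSum_midpoint]
  exact neg_apply_apply_eq_of_eigen RA RB
    (apply_layerSum_ampA_eq_neg_of_even hG hW hn RA hRAneg)
    (apply_layerSum_ampB_eq_self_of_even hG hW hn RA hRAid)
    (apply_layerSum_ampA_eq_self_of_odd hG hW hn hC RB hRBid)
    (apply_layerSum_ampB_eq_neg_of_odd hG hW hn hC RB hRBneg)

end Stmt18
end
end
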